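/- arXiv:2309.09644 — 9 statements merged into one kernel-verified Lean document; each statement's English description precedes it below -/
import Mathlib

section
/- Let n ≥ 1, x₀ ∈ ℝⁿ and 0 < r < 1. Define U : ℝⁿ → ℝ by U(x) = exp(−1/(r² − |x−x₀|²)) if |x−x₀| < r and U(x) = 0 otherwise. Then for every x with |x−x₀| < r one has Δ U(x) ≤ (12 + 2n) (r² − |x−x₀|²)^{−4} U(x). -/
open Set Filter

/-- The Laplacian of `f : ℝⁿ → ℝ` at `x`: the sum of the second partial
derivatives in the coordinate directions. -/
noncomputable def laplacian {n : ℕ} (f : EuclideanSpace ℝ (Fin n) → ℝ)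
    (x : EuclideanSpace ℝ (Fin n)) : ℝ :=
  ∑ i : Fin n, iteratedFDeriv ℝ 2 f x ![EuclideanSpace.single i 1, EuclideanSpace.single i 1]

/-!
Near `x`, `U` is the radial function `g (‖z - x₀‖ ^ 2)` with `g t = exp (-1 / (r ^ 2 - t))`, and
any such function has `Δ = 4 g''(s) s + 2 n g'(s)` at `s = ‖x - x₀‖ ^ 2`. With `q = r ^ 2 - s`
one has `g' = -e^{-1/q} / q ^ 2 ≤ 0` and `g'' = e^{-1/q} (1 - 2 q) / q ^ 4`, so
`Δ U ≤ 4 s U / q ^ 4 ≤ 4 U / q ^ 4`, because `s < r ^ 2 < 1`.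
-/

open Topology Real
open scoped RealInnerProductSpace

theorem hasDerivAt_exp_neg_inv_sub {a t : ℝ} (ht : t ≠ a) :
    HasDerivAt (fun t => exp (-1 / (a - t))) (-(exp (-1 / (a - t)) / (a - t) ^ 2)) t := by
  have h : a - t ≠ 0 := sub_ne_zero.2 ht.symm
  simp only [neg_div, one_div]
  refine (((hasDerivAt_id' t).const_sub a).inv h).neg.exp.congr_deriv ?_
  simp only [Pi.neg_apply, Pi.inv_apply]
  field_simp

theorem hasDerivAt_neg_exp_neg_inv_sub_div_sq {a t : ℝ} (ht : t ≠ a) :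
    HasDerivAt (fun t => -(exp (-1 / (a - t)) / (a - t) ^ 2))
      (exp (-1 / (a - t)) * (1 - 2 * (a - t)) / (a - t) ^ 4) t := by
  have h : a - t ≠ 0 := sub_ne_zero.2 ht.symm
  refine ((hasDerivAt_exp_neg_inv_sub ht).div (((hasDerivAt_id' t).const_sub a).pow 2)
    (pow_ne_zero 2 h)).neg.congr_deriv ?_
  simp only [Pi.pow_apply]
  field_simp
  ring

section Radial

variable {E : Type*} [NormedAddCommGroup E] [InnerProductSpace ℝ E] {x₀ y : E}

theorem hasFDerivAt_comp_norm_sub_sq {g : ℝ → ℝ} {g' : ℝ}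
    (hg : HasDerivAt g g' (‖y - x₀‖ ^ 2)) :
    HasFDerivAt (fun z => g (‖z - x₀‖ ^ 2)) ((2 * g') • innerSL ℝ (y - x₀)) y := by
  refine (hg.comp_hasFDerivAt y ((hasFDerivAt_id y).sub_const x₀).norm_sq).congr_fderiv ?_
  ext v
  simp [mul_comm, mul_left_comm]

theorem iteratedFDeriv_two_comp_norm_sub_sq {g g' : ℝ → ℝ} {g'' : ℝ}
    (hg : ∀ᶠ t in 𝓝 (‖y - x₀‖ ^ 2), HasDerivAt g (g' t) t)
    (hg' : HasDerivAt g' g'' (‖y - x₀‖ ^ 2)) (v w : E) :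
    iteratedFDeriv ℝ 2 (fun z => g (‖z - x₀‖ ^ 2)) y ![v, w] =
      4 * g'' * ⟪y - x₀, v⟫ * ⟪y - x₀, w⟫ + 2 * g' (‖y - x₀‖ ^ 2) * ⟪v, w⟫ := by
  have hcont : Tendsto (fun z : E => ‖z - x₀‖ ^ 2) (𝓝 y) (𝓝 (‖y - x₀‖ ^ 2)) :=
    ((continuous_id.sub continuous_const).norm.pow 2).continuousAt
  have hfderiv : fderiv ℝ (fun z => g (‖z - x₀‖ ^ 2)) =ᶠ[𝓝 y]
      fun z => (2 * g' (‖z - x₀‖ ^ 2)) • innerSL ℝ (z - x₀) :=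
    (hcont.eventually hg).mono fun z hz => (hasFDerivAt_comp_norm_sub_sq hz).fderiv
  have hinner : HasFDerivAt (fun z => innerSL ℝ (z - x₀)) (innerSL ℝ (E := E)) y :=
    ((innerSL ℝ).hasFDerivAt.comp y ((hasFDerivAt_id y).sub_const x₀)).congr_fderiv
      (by ext; simp)
  have hsecond : HasFDerivAt (fun z => (2 * g' (‖z - x₀‖ ^ 2)) • innerSL ℝ (z - x₀)) _ y :=
    ((hasFDerivAt_comp_norm_sub_sq hg').const_mul 2).smul hinner
  rw [iteratedFDeriv_two_apply]
  simp only [Matrix.cons_val_zero, Matrix.cons_val_one]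
  rw [hfderiv.fderiv_eq, hsecond.fderiv]
  simp only [add_apply, smul_apply, ContinuousLinearMap.smulRight_apply, innerSL_apply_apply,
    smul_eq_mul]
  erw [innerSL_apply_apply]
  ring

end Radial

section Laplacian

variable {n : ℕ} {x₀ x : EuclideanSpace ℝ (Fin n)}

theorem laplacian_congr_of_eventuallyEq {f g : EuclideanSpace ℝ (Fin n) → ℝ}
    (h : f =ᶠ[𝓝 x] g) : laplacian f x = laplacian g x := by
  simp only [laplacian, (h.iteratedFDeriv ℝ 2).eq_of_nhds]

theorem laplacian_comp_norm_sub_sq {g g' : ℝ → ℝ} {g'' : ℝ}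
    (hg : ∀ᶠ t in 𝓝 (‖x - x₀‖ ^ 2), HasDerivAt g (g' t) t)
    (hg' : HasDerivAt g' g'' (‖x - x₀‖ ^ 2)) :
    laplacian (fun z => g (‖z - x₀‖ ^ 2)) x =
      4 * g'' * ‖x - x₀‖ ^ 2 + 2 * n * g' (‖x - x₀‖ ^ 2) := by
  let b := EuclideanSpace.basisFun (Fin n) ℝ
  calc laplacian (fun z => g (‖z - x₀‖ ^ 2)) x
      = ∑ i, (4 * g'' * ⟪x - x₀, b i⟫ ^ 2 + 2 * g' (‖x - x₀‖ ^ 2)) := by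
        refine Finset.sum_congr rfl fun i _ => ?_
        rw [iteratedFDeriv_two_comp_norm_sub_sq hg hg', ← EuclideanSpace.basisFun_apply,
          b.inner_eq_one]
        ring
    _ = 4 * g'' * ‖x - x₀‖ ^ 2 + 2 * n * g' (‖x - x₀‖ ^ 2) := by
        rw [Finset.sum_add_distrib, ← Finset.mul_sum, b.sum_sq_inner_left]
        simp only [Finset.sum_const, Finset.card_univ, Fintype.card_fin, nsmul_eq_mul]
        ring

theorem laplacian_exp_neg_inv_sub_norm_sq_le {a : ℝ} (hxa : ‖x - x₀‖ ^ 2 < a)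
    (hx1 : ‖x - x₀‖ ^ 2 ≤ 1) :
    laplacian (fun z => exp (-1 / (a - ‖z - x₀‖ ^ 2))) x ≤
      4 * ((a - ‖x - x₀‖ ^ 2) ^ 4)⁻¹ * exp (-1 / (a - ‖x - x₀‖ ^ 2)) := by
  have hderiv : ∀ᶠ t in 𝓝 (‖x - x₀‖ ^ 2), HasDerivAt (fun t => exp (-1 / (a - t)))
      (-(exp (-1 / (a - t)) / (a - t) ^ 2)) t :=
    (eventually_ne_nhds hxa.ne).mono fun t ht => hasDerivAt_exp_neg_inv_sub ht
  rw [laplacian_comp_norm_sub_sq hderiv (hasDerivAt_neg_exp_neg_inv_sub_div_sq hxa.ne)]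
  set s := ‖x - x₀‖ ^ 2
  set q := a - s
  set E := exp (-1 / q)
  have hq : 0 < q := sub_pos.2 hxa
  have hE : 0 < E := exp_pos _
  have hnum : 4 * E * s * (1 - 2 * q) - 2 * n * E * q ^ 2 ≤ 4 * E := by
    nlinarith [mul_nonneg (mul_nonneg hE.le (sq_nonneg ‖x - x₀‖)) hq.le,
      mul_le_mul_of_nonneg_left hx1 hE.le,
      mul_nonneg (mul_nonneg n.cast_nonneg hE.le) (sq_nonneg q)]
  calc 4 * (E * (1 - 2 * q) / q ^ 4) * s + 2 * n * -(E / q ^ 2)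
      = (4 * E * s * (1 - 2 * q) - 2 * n * E * q ^ 2) / q ^ 4 := by
        field_simp
        ring
    _ ≤ 4 * E / q ^ 4 := by gcongr
    _ = 4 * (q ^ 4)⁻¹ * E := by ring

end Laplacian

theorem bump_laplacian_bound_general (n : ℕ) (x₀ : EuclideanSpace ℝ (Fin n))
    (r : ℝ) (hr1 : r < 1)
    (U : EuclideanSpace ℝ (Fin n) → ℝ)
    (hU : ∀ x, U x = if ‖x - x₀‖ < r then Real.exp (-1 / (r ^ 2 - ‖x - x₀‖ ^ 2)) else 0) :
    ∀ x, ‖x - x₀‖ < r →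
      laplacian U x ≤ (12 + 2 * (n : ℝ)) * ((r ^ 2 - ‖x - x₀‖ ^ 2) ^ 4)⁻¹ * U x := by
  intro x hx
  have hs : ‖x - x₀‖ ^ 2 < r ^ 2 := pow_lt_pow_left₀ hx (norm_nonneg _) two_ne_zero
  have hs1 : ‖x - x₀‖ ^ 2 ≤ 1 := hs.le.trans (by nlinarith [norm_nonneg (x - x₀)])
  have hUx : U =ᶠ[𝓝 x] fun z => exp (-1 / (r ^ 2 - ‖z - x₀‖ ^ 2)) := by
    filter_upwards [Metric.isOpen_ball.mem_nhds (mem_ball_iff_norm.2 hx)] with z hz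
    rw [hU, if_pos (mem_ball_iff_norm.1 hz)]
  rw [laplacian_congr_of_eventuallyEq hUx, hU x, if_pos hx]
  calc _ ≤ _ := laplacian_exp_neg_inv_sub_norm_sq_le hs hs1
    _ ≤ _ := by gcongr; linarith [n.cast_nonneg (α := ℝ)]

/-- for the standard bump function `U` supported in `B(x₀, r)` (with
`0 < r < 1`), one has `Δ U(x) ≤ (12 + 2n) (r² − |x−x₀|²)⁻⁴ U(x)` whenever `|x−x₀| < r`. -/
theorem bump_laplacian_bound (n : ℕ) (hn : 1 ≤ n) (x₀ : EuclideanSpace ℝ (Fin n))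
    (r : ℝ) (hr0 : 0 < r) (hr1 : r < 1)
    (U : EuclideanSpace ℝ (Fin n) → ℝ)
    (hU : ∀ x, U x = if ‖x - x₀‖ < r then Real.exp (-1 / (r ^ 2 - ‖x - x₀‖ ^ 2)) else 0) :
    ∀ x, ‖x - x₀‖ < r →
      laplacian U x ≤ (12 + 2 * (n : ℝ)) * ((r ^ 2 - ‖x - x₀‖ ^ 2) ^ 4)⁻¹ * U x :=
  bump_laplacian_bound_general n x₀ r hr1 U hU
end

section
/- Let n ≥ 1, x₀ ∈ ℝⁿ and 2 < m < 3. For r > 0 define U(·, r) : ℝⁿ → ℝ by U(x, r) = exp(−1/(r² − |x−x₀|²)) if |x−x₀| < r and U(x, r) = 0 otherwise. Then there exists r₁ ∈ (0,1) such that for every x ∈ ℝⁿ one has U(x, r₁)^{3−m} ≥ (m−1) Δ U(x, r₁), where Δ is taken in the x variable. -/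
open Set Filter

/-!
With `g = expNegInvGlue` we have `U(·, r) = g (r² - ‖· - x₀‖²)`, so with `s = r² - ‖x - x₀‖²`
the Laplacian is `4 g''(s) ‖x - x₀‖² - 2 n g'(s)`. Where `s > 0`, put `u = 1/s ≥ 1/r²`: since
`m - 1 < 2` and `g''(s) ≤ u⁴ e^{-u}`, `(m - 1) ΔU ≤ 8 r² u⁴ e^{-u} ≤ 8 r⁴ u⁵ e^{-u}`, whereas
`U^{3-m} = e^{(m-2)u} e^{-u} ≥ ((m-2)u)⁵ / 5! · e^{-u}`. So `960 r⁴ ≤ (m-2)⁵` suffices, which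
`r = (m-2)²/6` satisfies.
-/

open Real
open scoped RealInnerProductSpace

noncomputable def expNegInvGlue' (s : ℝ) : ℝ := s⁻¹ ^ 2 * expNegInvGlue s

noncomputable def expNegInvGlue'' (s : ℝ) : ℝ := (s⁻¹ ^ 4 - 2 * s⁻¹ ^ 3) * expNegInvGlue s

theorem hasDerivAt_expNegInvGlue (s : ℝ) : HasDerivAt expNegInvGlue (expNegInvGlue' s) s := by
  simpa [expNegInvGlue'] using expNegInvGlue.hasDerivAt_polynomial_eval_inv_mul 1 s

theorem hasDerivAt_expNegInvGlue' (s : ℝ) : HasDerivAt expNegInvGlue' (expNegInvGlue'' s) s := by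
  convert expNegInvGlue.hasDerivAt_polynomial_eval_inv_mul (Polynomial.X ^ 2) s using 1
  · ext x
    simp [expNegInvGlue']
  · simp only [expNegInvGlue'', Polynomial.derivative_X_pow, Polynomial.eval_mul,
      Polynomial.eval_pow, Polynomial.eval_X, Polynomial.eval_sub, Polynomial.eval_C]
    ring

section RadialProfile

variable {E : Type*} [NormedAddCommGroup E] [InnerProductSpace ℝ E]
  {f f' f'' : ℝ → ℝ} (c : ℝ) (x₀ : E)

theorem hasFDerivAt_const_sub_norm_sub_sq (y : E) :
    HasFDerivAt (fun z => c - ‖z - x₀‖ ^ 2) ((-2 : ℝ) • innerSL ℝ (y - x₀)) y := by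
  refine ((hasFDerivAt_const c y).sub (hasFDerivAt_sub_const x₀).norm_sq).congr_fderiv ?_
  ext v
  simp

theorem fderiv_comp_const_sub_norm_sub_sq (hf : ∀ s, HasDerivAt f (f' s) s) :
    fderiv ℝ (fun y => f (c - ‖y - x₀‖ ^ 2)) =
      fun y => (-2 * f' (c - ‖y - x₀‖ ^ 2)) • innerSL ℝ (y - x₀) := by
  ext y : 1
  refine ((hf _).comp_hasFDerivAt y (hasFDerivAt_const_sub_norm_sub_sq c x₀ y)).fderiv.trans ?_
  ext v
  simp only [smul_apply]
  ring

theorem iteratedFDeriv_two_comp_const_sub_norm_sub_sq (hf : ∀ s, HasDerivAt f (f' s) s)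
    (hf' : ∀ s, HasDerivAt f' (f'' s) s) (x v w : E) :
    iteratedFDeriv ℝ 2 (fun y => f (c - ‖y - x₀‖ ^ 2)) x ![v, w] =
      4 * f'' (c - ‖x - x₀‖ ^ 2) * ⟪x - x₀, v⟫ * ⟪x - x₀, w⟫
        - 2 * f' (c - ‖x - x₀‖ ^ 2) * ⟪v, w⟫ := by
  have hcoeff : HasFDerivAt (fun y => -2 * f' (c - ‖y - x₀‖ ^ 2))
      ((-2 * f'' (c - ‖x - x₀‖ ^ 2)) • (-2 : ℝ) • innerSL ℝ (x - x₀)) x :=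
    ((hf' _).const_mul (-2)).comp_hasFDerivAt x (hasFDerivAt_const_sub_norm_sub_sq c x₀ x)
  have hinner : HasFDerivAt (fun y => innerSL ℝ (y - x₀)) (innerSL ℝ) x :=
    (innerSL ℝ).hasFDerivAt.comp x (hasFDerivAt_sub_const x₀)
  rw [iteratedFDeriv_two_apply, fderiv_comp_const_sub_norm_sub_sq c x₀ hf,
    (hcoeff.fun_smul hinner).fderiv]
  simp only [Matrix.cons_val_zero, Matrix.cons_val_one, Matrix.cons_val_fin_one, add_apply,
    smul_apply, ContinuousLinearMap.smulRight_apply, innerSL_apply_apply, smul_eq_mul]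
  -- the `ℝ`-module structure on `ℝ` produced by `fun_smul` is not syntactically the one in
  -- `innerSL_apply_apply`, so the evaluation is done by `rfl`
  rw [show innerSL ℝ v w = ⟪v, w⟫ from rfl]
  ring

end RadialProfile

theorem laplacian_comp_const_sub_norm_sub_sq {n : ℕ} {f f' f'' : ℝ → ℝ}
    (hf : ∀ s, HasDerivAt f (f' s) s) (hf' : ∀ s, HasDerivAt f' (f'' s) s) (c : ℝ)
    (x₀ x : EuclideanSpace ℝ (Fin n)) :
    laplacian (fun y => f (c - ‖y - x₀‖ ^ 2)) x =
      4 * f'' (c - ‖x - x₀‖ ^ 2) * ‖x - x₀‖ ^ 2 - 2 * n * f' (c - ‖x - x₀‖ ^ 2) := by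
  simp only [laplacian, iteratedFDeriv_two_comp_const_sub_norm_sub_sq c x₀ hf hf']
  generalize c - ‖x - x₀‖ ^ 2 = s
  rw [EuclideanSpace.real_norm_sq_eq, Finset.mul_sum]
  simp only [EuclideanSpace.inner_single_right, PiLp.sub_apply, ringHom_apply, one_mul,
    inner_self_eq_norm_sq_to_K, PiLp.norm_single, norm_one, mul_one,
    Finset.sum_sub_distrib, Finset.sum_const, Finset.card_univ, Fintype.card_fin, nsmul_eq_mul,
    sq, mul_assoc]
  ring

theorem ite_exp_eq_expNegInvGlue {a r : ℝ} (ha : 0 ≤ a) (hr : 0 ≤ r) :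
    (if a < r then exp (-1 / (r ^ 2 - a ^ 2)) else 0) = expNegInvGlue (r ^ 2 - a ^ 2) := by
  split_ifs with har
  · have hpos : 0 < r ^ 2 - a ^ 2 := by nlinarith
    rw [expNegInvGlue, if_neg hpos.not_ge, neg_div, one_div]
  · exact (expNegInvGlue.zero_of_nonpos (by nlinarith)).symm

theorem sub_one_mul_expNegInvGlue_laplacian_le_rpow {N m r t : ℝ} (hN : 0 ≤ N) (hm2 : 2 < m)
    (hm3 : m ≤ 3) (ht : 0 ≤ t) (hr : 960 * r ^ 4 ≤ (m - 2) ^ 5) :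
    (m - 1) * (4 * expNegInvGlue'' (r ^ 2 - t) * t - 2 * N * expNegInvGlue' (r ^ 2 - t)) ≤
      expNegInvGlue (r ^ 2 - t) ^ (3 - m) := by
  set s := r ^ 2 - t
  rcases le_or_gt s 0 with hs0 | hs0
  · simp [expNegInvGlue', expNegInvGlue'', expNegInvGlue.zero_of_nonpos hs0, zero_rpow_nonneg]
  set u := s⁻¹ with hu
  have hu0 : 0 < u := inv_pos.2 hs0
  have hglue : expNegInvGlue s = exp (-u) := by rw [expNegInvGlue, if_neg hs0.not_ge]
  have hru : 1 ≤ r ^ 2 * u := by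
    rw [hu, ← div_eq_mul_inv, one_le_div hs0]
    linarith
  have hprofile : (m - 1) * (4 * (u ^ 4 - 2 * u ^ 3) * t - 2 * N * u ^ 2) ≤ 8 * r ^ 4 * u ^ 5 :=
    calc (m - 1) * (4 * (u ^ 4 - 2 * u ^ 3) * t - 2 * N * u ^ 2)
        ≤ (m - 1) * (4 * u ^ 4 * t) := by
          gcongr
          · linarith
          · nlinarith [mul_nonneg ht (pow_nonneg hu0.le 3), mul_nonneg hN (sq_nonneg u)]
      _ ≤ 2 * (4 * u ^ 4 * r ^ 2) := by gcongr <;> linarith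
      _ ≤ 2 * (4 * u ^ 4 * r ^ 2) * (r ^ 2 * u) := le_mul_of_one_le_right (by positivity) hru
      _ = 8 * r ^ 4 * u ^ 5 := by ring
  have hpoly : 8 * r ^ 4 * u ^ 5 ≤ exp ((m - 2) * u) := by
    have := pow_div_factorial_le_exp _ (by positivity : 0 ≤ (m - 2) * u) 5
    norm_num [Nat.factorial] at this
    nlinarith [pow_pos hu0 5]
  calc (m - 1) * (4 * expNegInvGlue'' s * t - 2 * N * expNegInvGlue' s)
      = (m - 1) * (4 * (u ^ 4 - 2 * u ^ 3) * t - 2 * N * u ^ 2) * exp (-u) := by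
        simp only [expNegInvGlue', expNegInvGlue'', hglue, ← hu]
        ring
    _ ≤ exp ((m - 2) * u) * exp (-u) := by gcongr; exact hprofile.trans hpoly
    _ = exp (-u) ^ (3 - m) := by rw [← exp_add, ← exp_mul]; ring_nf
    _ = expNegInvGlue s ^ (3 - m) := by rw [hglue]

theorem bump_power_ge_laplacian_general (n : ℕ) (x₀ : EuclideanSpace ℝ (Fin n))
    (m : ℝ) (hm2 : 2 < m) (hm3 : m < 3)
    (U : EuclideanSpace ℝ (Fin n) → ℝ → ℝ)
    (hU : ∀ x r, U x r = if ‖x - x₀‖ < r then Real.exp (-1 / (r ^ 2 - ‖x - x₀‖ ^ 2)) else 0) :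
    ∃ r₁ ∈ Set.Ioo (0 : ℝ) 1, ∀ x,
      (m - 1) * laplacian (fun y => U y r₁) x ≤ U x r₁ ^ (3 - m) := by
  set r := (m - 2) ^ 2 / 6
  have hε0 : 0 < m - 2 := by linarith
  have hε1 : m - 2 < 1 := by linarith
  have hr0 : 0 < r := by positivity
  have hr1 : r < 1 := by
    show (m - 2) ^ 2 / 6 < 1
    nlinarith
  have hr : 960 * r ^ 4 ≤ (m - 2) ^ 5 :=
    calc 960 * r ^ 4 = (m - 2) ^ 5 * (20 / 27 * (m - 2) ^ 3) := by ring
      _ ≤ (m - 2) ^ 5 * 1 := by gcongr; nlinarith [pow_lt_one₀ hε0.le hε1 (by norm_num : 3 ≠ 0)]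
      _ = (m - 2) ^ 5 := mul_one _
  have hUr : (fun y => U y r) = fun y => expNegInvGlue (r ^ 2 - ‖y - x₀‖ ^ 2) :=
    funext fun y => (hU y r).trans (ite_exp_eq_expNegInvGlue (norm_nonneg _) hr0.le)
  refine ⟨r, ⟨hr0, hr1⟩, fun x => ?_⟩
  rw [hUr, congrFun hUr x,
    laplacian_comp_const_sub_norm_sub_sq hasDerivAt_expNegInvGlue hasDerivAt_expNegInvGlue']
  exact sub_one_mul_expNegInvGlue_laplacian_le_rpow n.cast_nonneg hm2 hm3.le (sq_nonneg _) hr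

/-- for `2 < m < 3` there is a radius `r₁ ∈ (0,1)` such that the standard
bump function `U(·, r₁)` supported in `B(x₀, r₁)` satisfies
`U(x, r₁)^{3−m} ≥ (m−1) Δ U(x, r₁)` for every `x ∈ ℝⁿ`. -/
theorem bump_power_ge_laplacian (n : ℕ) (hn : 1 ≤ n) (x₀ : EuclideanSpace ℝ (Fin n))
    (m : ℝ) (hm2 : 2 < m) (hm3 : m < 3)
    (U : EuclideanSpace ℝ (Fin n) → ℝ → ℝ)
    (hU : ∀ x r, U x r = if ‖x - x₀‖ < r then Real.exp (-1 / (r ^ 2 - ‖x - x₀‖ ^ 2)) else 0) :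
    ∃ r₁ ∈ Set.Ioo (0 : ℝ) 1, ∀ x,
      (m - 1) * laplacian (fun y => U y r₁) x ≤ U x r₁ ^ (3 - m) :=
  bump_power_ge_laplacian_general n x₀ m hm2 hm3 U hU
end

section
/- Let Ω ⊂ ℝⁿ be a bounded open set and let u₀ : closure(Ω) → ℝ be continuous with u₀ ≥ 0 and u₀ not identically zero. Then there exists a C^∞ function u̲₀ : Ω → ℝ such that: u̲₀ is not identically zero; 0 ≤ u̲₀(x) ≤ min{u₀(x), 1} for all x ∈ Ω; the support of u̲₀ is a compact subset of Ω; and 2 Δ u̲₀(x) ≤ 1 for all x ∈ Ω. -/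
open Set Filter

/-!
Take a point where `u₀` is positive; by continuity `u₀ > c > 0` on a closed ball inside `Ω`
centred at a nearby point of `Ω`. A smooth bump `φ` supported in that ball has a bounded
Laplacian, so `δ • φ` with `δ ≤ min c 1` small enough lies below `min u₀ 1` and satisfies
`2 Δ (δ • φ) ≤ 1`.
-/

open Metric

section Laplacian

variable {n : ℕ} {f : EuclideanSpace ℝ (Fin n) → ℝ}

theorem laplacian_eq_zero_of_notMem_tsupport {x : EuclideanSpace ℝ (Fin n)}
    (hx : x ∉ tsupport f) : laplacian f x = 0 := by
  have h : iteratedFDeriv ℝ 2 f x = 0 :=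
    image_eq_zero_of_notMem_tsupport fun h ↦ hx (tsupport_iteratedFDeriv_subset 2 h)
  simp [laplacian, h]

theorem laplacian_const_smul {x : EuclideanSpace ℝ (Fin n)} (hf : ContDiffAt ℝ 2 f x) (a : ℝ) :
    laplacian (a • f) x = a * laplacian f x := by
  simp [laplacian, iteratedFDeriv_const_smul_apply hf, Finset.mul_sum]

theorem continuous_laplacian (hf : ContDiff ℝ 2 f) : Continuous (laplacian f) :=
  continuous_finsetSum _ fun _ _ ↦
    (continuous_eval_const _).comp (hf.continuous_iteratedFDeriv le_rfl)

theorem HasCompactSupport.laplacian (hf : HasCompactSupport f) :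
    HasCompactSupport (laplacian f) :=
  hf.mono' fun _ hx ↦ by_contra fun h ↦ hx (laplacian_eq_zero_of_notMem_tsupport h)

theorem exists_pos_forall_laplacian_smul_le (hf : ContDiff ℝ 2 f) (hfc : HasCompactSupport f)
    {c : ℝ} (hc : 0 < c) :
    ∃ ε > 0, ∀ δ ∈ Icc (0 : ℝ) ε, ∀ x, laplacian (δ • f) x ≤ c := by
  obtain ⟨M, hM⟩ :=
    (continuous_laplacian hf).bddAbove_range_of_hasCompactSupport hfc.laplacian
  set M' := max M 0
  have hM' : 0 ≤ M' := le_max_right _ _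
  refine ⟨c / (M' + 1), by positivity, fun δ ⟨hδ₀, hδ⟩ x ↦ ?_⟩
  rw [laplacian_const_smul hf.contDiffAt]
  calc δ * laplacian f x ≤ δ * M' :=
        mul_le_mul_of_nonneg_left ((hM ⟨x, rfl⟩).trans (le_max_left _ _)) hδ₀
    _ ≤ c / (M' + 1) * M' := mul_le_mul_of_nonneg_right hδ hM'
    _ ≤ c := by
        rw [div_mul_eq_mul_div, div_le_iff₀ (by positivity)]
        nlinarith

end Laplacian

theorem exists_closedBall_subset_inter_preimage_Ioi {X : Type*} [PseudoMetricSpace X]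
    {Ω : Set X} {u : X → ℝ} {x : X} {c : ℝ} (hΩ : IsOpen Ω) (hu : ContinuousOn u (closure Ω))
    (hx : x ∈ closure Ω) (hc : c < u x) :
    ∃ x₀, ∃ r > 0, closedBall x₀ r ⊆ Ω ∩ u ⁻¹' Ioi c := by
  have hux : u x ∈ closure (u '' Ω) :=
    ((hu x hx).mono subset_closure).mem_closure_image hx
  obtain ⟨_, hc', x₀, hx₀, rfl⟩ := mem_closure_iff.mp hux (Ioi c) isOpen_Ioi hc
  have hopen : IsOpen (Ω ∩ u ⁻¹' Ioi c) :=
    (hu.mono subset_closure).isOpen_inter_preimage hΩ isOpen_Ioi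
  exact ⟨x₀, nhds_basis_closedBall.mem_iff.mp (hopen.mem_nhds ⟨hx₀, hc'⟩)⟩

theorem ContDiffBump.const_mul_le {E : Type*} [NormedAddCommGroup E] [NormedSpace ℝ E]
    [HasContDiffBump E] {c : E} (φ : ContDiffBump c) {δ : ℝ} (hδ : 0 ≤ δ) {u : E → ℝ} {y : E}
    (hu : y ∈ closedBall c φ.rOut → δ ≤ u y) (hu_nonneg : 0 ≤ u y) : δ * φ y ≤ u y := by
  by_cases hy : y ∈ closedBall c φ.rOut
  · exact (mul_le_of_le_one_right hδ φ.le_one).trans (hu hy)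
  · rw [φ.zero_of_le_dist (not_le.mp hy).le, mul_zero]
    exact hu_nonneg

theorem initial_subsolution_exists'_general (n : ℕ) (Ω : Set (EuclideanSpace ℝ (Fin n)))
    (hΩo : IsOpen Ω)
    (u₀ : EuclideanSpace ℝ (Fin n) → ℝ)
    (hu₀c : ContinuousOn u₀ (closure Ω))
    (hu₀nonneg : ∀ x ∈ closure Ω, 0 ≤ u₀ x)
    (hu₀ne : ∃ x ∈ closure Ω, u₀ x ≠ 0) :
    ∃ f : EuclideanSpace ℝ (Fin n) → ℝ,
      ContDiff ℝ (⊤ : ℕ∞) f ∧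
      (∃ x ∈ Ω, f x ≠ 0) ∧
      (∀ x ∈ Ω, 0 ≤ f x ∧ f x ≤ min (u₀ x) 1) ∧
      IsCompact (tsupport f) ∧ tsupport f ⊆ Ω ∧
      (∀ x ∈ Ω, 2 * laplacian f x ≤ 1) := by
  obtain ⟨x, hx, hx₀⟩ := hu₀ne
  have hpos : 0 < u₀ x := (hu₀nonneg x hx).lt_of_ne' hx₀
  obtain ⟨x₀, r, hr, hball⟩ :=
    exists_closedBall_subset_inter_preimage_Ioi hΩo hu₀c hx (half_lt_self hpos)
  let φ : ContDiffBump x₀ := ⟨r / 2, r, half_pos hr, half_lt_self hr⟩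
  obtain ⟨ε, hε, hlap⟩ :=
    exists_pos_forall_laplacian_smul_le φ.contDiff φ.hasCompactSupport one_half_pos
  set δ : ℝ := min ε (min (u₀ x / 2) 1)
  have hδ : 0 < δ := by positivity
  have hδu₀ : δ ≤ u₀ x / 2 := (min_le_right _ _).trans (min_le_left _ _)
  have hδ₁ : δ ≤ 1 := (min_le_right _ _).trans (min_le_right _ _)
  have htsupport : tsupport (δ • ⇑φ) ⊆ closedBall x₀ r :=
    (tsupport_smul_subset_right (fun _ ↦ δ) φ).trans φ.tsupport_eq.le
  refine ⟨δ • ⇑φ, φ.contDiff.const_smul δ, ⟨x₀, (hball (mem_closedBall_self hr.le)).1, ?_⟩,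
    fun y hy ↦ ⟨smul_nonneg hδ.le φ.nonneg, le_min ?_ ?_⟩,
    (isCompact_closedBall x₀ r).of_isClosed_subset (isClosed_tsupport _) htsupport,
    htsupport.trans (hball.trans inter_subset_left),
    fun y _ ↦ by linarith [hlap δ ⟨hδ.le, min_le_left _ _⟩ y]⟩
  · simp [φ.one_of_mem_closedBall (mem_closedBall_self (half_pos hr).le), hδ.ne']
  · exact φ.const_mul_le hδ.le (fun hy ↦ hδu₀.trans (hball hy).2.le)
      (hu₀nonneg y (subset_closure hy))
  · exact φ.const_mul_le (u := fun _ ↦ 1) hδ.le (fun _ ↦ hδ₁) zero_le_one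

/-- Lemma 2.1, case used for `m ≥ 3`: given `u₀` continuous and nonnegative on
`closure Ω`, not identically zero, there is a smooth function `u̲₀`, not identically zero,
with `0 ≤ u̲₀ ≤ min {u₀, 1}` on `Ω`, compactly supported in `Ω`, satisfying
`2 Δ u̲₀ ≤ 1` on `Ω`. -/
theorem initial_subsolution_exists' (n : ℕ) (Ω : Set (EuclideanSpace ℝ (Fin n)))
    (hΩo : IsOpen Ω) (hΩb : Bornology.IsBounded Ω)
    (u₀ : EuclideanSpace ℝ (Fin n) → ℝ)
    (hu₀c : ContinuousOn u₀ (closure Ω))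
    (hu₀nonneg : ∀ x ∈ closure Ω, 0 ≤ u₀ x)
    (hu₀ne : ∃ x ∈ closure Ω, u₀ x ≠ 0) :
    ∃ f : EuclideanSpace ℝ (Fin n) → ℝ,
      ContDiff ℝ (⊤ : ℕ∞) f ∧
      (∃ x ∈ Ω, f x ≠ 0) ∧
      (∀ x ∈ Ω, 0 ≤ f x ∧ f x ≤ min (u₀ x) 1) ∧
      IsCompact (tsupport f) ∧ tsupport f ⊆ Ω ∧
      (∀ x ∈ Ω, 2 * laplacian f x ≤ 1) :=
  initial_subsolution_exists'_general n Ω hΩo u₀ hu₀c hu₀nonneg hu₀ne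
end

section
/- Let δ > 0, 2 < m < 3, t₀ > 0, and let g : [0, t₀] → ℝ be continuously differentiable with g ≥ 0, g(0) = 0, and (m−1) g′(t) ≤ g(t)^{3−m} for all t ∈ [0, t₀]. Then e^{−(m−1)δ t₀} g(t₀)^{m−1} ≤ ∫₀^{t₀} e^{−δτ} g(τ) dτ. -/
open Set Real MeasureTheory

/-! `F t = e^{-pδt} g(t)^p`, with `p = m - 1`, vanishes at `0`, and the hypothesis
`p g' ≤ g^{2-p}` makes its derivative at most `e^{-pδt} g(t) ≤ e^{-δt} g(t)`;
integrating this bound over `[0, t₀]` gives the claim. -/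

lemma rpow_mul_le_self_of_le_rpow_one_sub {x y q : ℝ} (hx : 0 ≤ x) (h : y ≤ x ^ (1 - q)) :
    x ^ q * y ≤ x := calc
  x ^ q * y ≤ x ^ q * x ^ (1 - q) := mul_le_mul_of_nonneg_left h (rpow_nonneg hx q)
  _ = x := by rw [← rpow_add' hx (by norm_num), add_sub_cancel, rpow_one]

lemma hasDerivWithinAt_exp_mul_rpow {g : ℝ → ℝ} {g' c p t : ℝ} {s : Set ℝ}
    (hg : HasDerivWithinAt g g' s t) (hp : 1 ≤ p) :
    HasDerivWithinAt (fun τ => exp (c * τ) * g τ ^ p)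
      (exp (c * t) * (p * g t ^ (p - 1) * g' + c * g t ^ p)) s t := by
  have hexp : HasDerivWithinAt (fun τ => exp (c * τ)) (exp (c * t) * c) s t :=
    (((hasDerivAt_id t).const_mul c).exp.hasDerivWithinAt).congr_deriv (by simp)
  exact (hexp.mul (hg.rpow_const (Or.inr hp))).congr_deriv (by ring)

lemma exp_mul_rpow_deriv_le {δ p t x d : ℝ} (hδ : 0 ≤ δ) (hp : 1 ≤ p) (ht : 0 ≤ t)
    (hx : 0 ≤ x) (hd : p * d ≤ x ^ (2 - p)) :
    exp (-p * δ * t) * (p * x ^ (p - 1) * d + -p * δ * x ^ p) ≤ exp (-δ * t) * x := by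
  have hpow : p * x ^ (p - 1) * d ≤ x := by
    rw [mul_comm p, mul_assoc]
    exact rpow_mul_le_self_of_le_rpow_one_sub hx (by rwa [sub_sub_eq_add_sub, one_add_one_eq_two])
  have hdamp : 0 ≤ p * δ * x ^ p := by positivity
  have hexp : exp (-p * δ * t) ≤ exp (-δ * t) :=
    exp_le_exp.2 (by nlinarith [mul_nonneg (mul_nonneg (sub_nonneg.2 hp) hδ) ht])
  calc exp (-p * δ * t) * (p * x ^ (p - 1) * d + -p * δ * x ^ p)
      ≤ exp (-p * δ * t) * x := mul_le_mul_of_nonneg_left (by linarith) (exp_pos _).le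
    _ ≤ exp (-δ * t) * x := mul_le_mul_of_nonneg_right hexp hx

theorem exp_mul_rpow_le_integral {δ p T : ℝ} {g g' : ℝ → ℝ} (hδ : 0 ≤ δ) (hp : 1 ≤ p)
    (hT : 0 ≤ T) (hderiv : ∀ t ∈ Icc 0 T, HasDerivWithinAt g (g' t) (Icc 0 T) t)
    (hnonneg : ∀ t ∈ Icc 0 T, 0 ≤ g t) (hzero : g 0 = 0)
    (hineq : ∀ t ∈ Icc 0 T, p * g' t ≤ g t ^ (2 - p)) :
    exp (-p * δ * T) * g T ^ p ≤ ∫ τ in (0 : ℝ)..T, exp (-δ * τ) * g τ := by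
  have hg : ContinuousOn g (Icc 0 T) := fun t ht => (hderiv t ht).continuousWithinAt
  have hF : ContinuousOn (fun t => exp (-p * δ * t) * g t ^ p) (Icc 0 T) :=
    (by fun_prop : Continuous fun t => exp (-p * δ * t)).continuousOn.mul
      (hg.rpow_const fun _ _ => Or.inr (by linarith))
  have hφ : IntegrableOn (fun τ => exp (-δ * τ) * g τ) (Icc 0 T) :=
    ((by fun_prop : Continuous fun τ => exp (-δ * τ)).continuousOn.mul hg).integrableOn_Icc
  have hderiv' : ∀ t ∈ Ioo 0 T, HasDerivAt g (g' t) t := fun t ht =>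
    (hderiv t (Ioo_subset_Icc_self ht)).hasDerivAt (Icc_mem_nhds ht.1 ht.2)
  have key := intervalIntegral.sub_le_integral_of_hasDeriv_right_of_le hT hF
    (fun t ht => hasDerivWithinAt_exp_mul_rpow (hderiv' t ht).hasDerivWithinAt hp) hφ
    (fun t ht => exp_mul_rpow_deriv_le hδ hp ht.1.le (hnonneg t (Ioo_subset_Icc_self ht))
      (hineq t (Ioo_subset_Icc_self ht)))
  simpa [hzero, zero_rpow (by linarith : p ≠ 0)] using key

theorem power_le_integral_of_deriv_le_general (δ : ℝ) (hδ : 0 < δ)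
    (m : ℝ) (hm2 : 2 < m)
    (t₀ : ℝ) (ht₀ : 0 < t₀)
    (g g' : ℝ → ℝ)
    (hderiv : ∀ t ∈ Set.Icc 0 t₀, HasDerivWithinAt g (g' t) (Set.Icc 0 t₀) t)
    (hnonneg : ∀ t ∈ Set.Icc 0 t₀, 0 ≤ g t)
    (hzero : g 0 = 0)
    (hineq : ∀ t ∈ Set.Icc 0 t₀, (m - 1) * g' t ≤ g t ^ (3 - m)) :
    Real.exp (-(m - 1) * δ * t₀) * g t₀ ^ (m - 1)
      ≤ ∫ τ in (0 : ℝ)..t₀, Real.exp (-δ * τ) * g τ := by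
  have hexponent : 2 - (m - 1) = 3 - m := by ring
  exact exp_mul_rpow_le_integral hδ.le (by linarith) ht₀.le hderiv hnonneg hzero
    (by simpa only [hexponent] using hineq)

/-- if `g ≥ 0` is `C¹` on `[0, t₀]` with `g(0) = 0` and
`(m−1) g′ ≤ g^{3−m}` (with `2 < m < 3`), then
`e^{−(m−1)δt₀} g(t₀)^{m−1} ≤ ∫₀^{t₀} e^{−δτ} g(τ) dτ` for every `δ > 0`. -/
theorem power_le_integral_of_deriv_le (δ : ℝ) (hδ : 0 < δ)
    (m : ℝ) (hm2 : 2 < m) (hm3 : m < 3)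
    (t₀ : ℝ) (ht₀ : 0 < t₀)
    (g g' : ℝ → ℝ)
    (hderiv : ∀ t ∈ Set.Icc 0 t₀, HasDerivWithinAt g (g' t) (Set.Icc 0 t₀) t)
    (hcont : ContinuousOn g' (Set.Icc 0 t₀))
    (hnonneg : ∀ t ∈ Set.Icc 0 t₀, 0 ≤ g t)
    (hzero : g 0 = 0)
    (hineq : ∀ t ∈ Set.Icc 0 t₀, (m - 1) * g' t ≤ g t ^ (3 - m)) :
    Real.exp (-(m - 1) * δ * t₀) * g t₀ ^ (m - 1)
      ≤ ∫ τ in (0 : ℝ)..t₀, Real.exp (-δ * τ) * g τ :=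
  power_le_integral_of_deriv_le_general δ hδ m hm2 t₀ ht₀ g g' hderiv hnonneg hzero hineq
end

section
/- Let δ > 0, t₀ > 0, and let g : [0, t₀] → ℝ be continuously differentiable with g ≥ 0, g(0) = 0, and 2 g′(t) ≤ 1 for all t ∈ [0, t₀]. Then e^{−2δ t₀} g(t₀)² ≤ ∫₀^{t₀} e^{−δτ} g(τ) dτ. -/
/-! Since `g ≥ 0` and `2 g′ ≤ 1`, the derivative `2 g g′` of `g²` is at most `g`, so
`g(t₀)² ≤ ∫₀^{t₀} g`; on `[0, t₀]` the weight `e^{−δτ}` dominates the constant `e^{−2δt₀}`. -/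

open Set

theorem sq_sub_sq_le_integral_of_two_mul_deriv_le {g g' : ℝ → ℝ} {a b : ℝ} (hab : a ≤ b)
    (hcont : ContinuousOn g (Icc a b)) (hderiv : ∀ x ∈ Ioo a b, HasDerivAt g (g' x) x)
    (hnonneg : ∀ x ∈ Ioo a b, 0 ≤ g x) (hineq : ∀ x ∈ Ioo a b, 2 * g' x ≤ 1) :
    g b ^ 2 - g a ^ 2 ≤ ∫ x in a..b, g x := by
  refine intervalIntegral.sub_le_integral_of_hasDeriv_right_of_le hab (hcont.pow 2)
    (fun x hx => ((hderiv x hx).pow 2).hasDerivWithinAt) hcont.integrableOn_Icc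
    fun x hx => ?_
  have h := mul_le_mul_of_nonneg_left (hineq x hx) (hnonneg x hx)
  norm_num at h ⊢
  linarith

theorem exp_neg_two_mul_le_exp_neg_mul {δ t₀ τ : ℝ} (hδ : 0 ≤ δ) (hτ₀ : 0 ≤ τ) (hτ : τ ≤ t₀) :
    Real.exp (-2 * δ * t₀) ≤ Real.exp (-δ * τ) :=
  Real.exp_le_exp.2 (by nlinarith)

theorem sq_le_integral_of_deriv_le_general (δ : ℝ) (hδ : 0 < δ)
    (t₀ : ℝ) (ht₀ : 0 < t₀)
    (g g' : ℝ → ℝ)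
    (hderiv : ∀ t ∈ Set.Icc 0 t₀, HasDerivWithinAt g (g' t) (Set.Icc 0 t₀) t)
    (hnonneg : ∀ t ∈ Set.Icc 0 t₀, 0 ≤ g t)
    (hzero : g 0 = 0)
    (hineq : ∀ t ∈ Set.Icc 0 t₀, 2 * g' t ≤ 1) :
    Real.exp (-2 * δ * t₀) * g t₀ ^ 2
      ≤ ∫ τ in (0 : ℝ)..t₀, Real.exp (-δ * τ) * g τ := by
  have hg : ContinuousOn g (Icc 0 t₀) := fun t ht => (hderiv t ht).continuousWithinAt
  have hsq : g t₀ ^ 2 ≤ ∫ τ in (0 : ℝ)..t₀, g τ := by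
    simpa [hzero] using sq_sub_sq_le_integral_of_two_mul_deriv_le ht₀.le hg
      (fun t ht => (hderiv t (Ioo_subset_Icc_self ht)).hasDerivAt (Icc_mem_nhds ht.1 ht.2))
      (fun t ht => hnonneg t (Ioo_subset_Icc_self ht))
      (fun t ht => hineq t (Ioo_subset_Icc_self ht))
  calc Real.exp (-2 * δ * t₀) * g t₀ ^ 2
      ≤ ∫ τ in (0 : ℝ)..t₀, Real.exp (-2 * δ * t₀) * g τ := by
        rw [intervalIntegral.integral_const_mul]
        exact mul_le_mul_of_nonneg_left hsq (Real.exp_pos _).le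
    _ ≤ ∫ τ in (0 : ℝ)..t₀, Real.exp (-δ * τ) * g τ := by
        refine intervalIntegral.integral_mono_on ht₀.le ?_ ?_ fun τ hτ =>
          mul_le_mul_of_nonneg_right (exp_neg_two_mul_le_exp_neg_mul hδ.le hτ.1 hτ.2)
            (hnonneg τ hτ)
        · exact (continuousOn_const.mul hg).intervalIntegrable_of_Icc ht₀.le
        · exact ((by fun_prop : Continuous fun τ => Real.exp (-δ * τ)).continuousOn.mul
            hg).intervalIntegrable_of_Icc ht₀.le

/-- version for exponents `m ≥ 3`: if `g ≥ 0` is `C¹` on `[0, t₀]` with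
`g(0) = 0` and `2 g′ ≤ 1`, then `e^{−2δt₀} g(t₀)² ≤ ∫₀^{t₀} e^{−δτ} g(τ) dτ` for every
`δ > 0`. -/
theorem sq_le_integral_of_deriv_le (δ : ℝ) (hδ : 0 < δ)
    (t₀ : ℝ) (ht₀ : 0 < t₀)
    (g g' : ℝ → ℝ)
    (hderiv : ∀ t ∈ Set.Icc 0 t₀, HasDerivWithinAt g (g' t) (Set.Icc 0 t₀) t)
    (hcont : ContinuousOn g' (Set.Icc 0 t₀))
    (hnonneg : ∀ t ∈ Set.Icc 0 t₀, 0 ≤ g t)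
    (hzero : g 0 = 0)
    (hineq : ∀ t ∈ Set.Icc 0 t₀, 2 * g' t ≤ 1) :
    Real.exp (-2 * δ * t₀) * g t₀ ^ 2
      ≤ ∫ τ in (0 : ℝ)..t₀, Real.exp (-δ * τ) * g τ :=
  sq_le_integral_of_deriv_le_general δ hδ t₀ ht₀ g g' hderiv hnonneg hzero hineq
end

section
/- Let Ω ⊂ ℝⁿ be a bounded open set, T > 0, 2 < m < 3, k > 0. Let u₀, v₀ : closure(Ω) → ℝ be continuous with u₀ ≥ 0, v₀ ≥ 0 and u₀ v₀ ≡ 0, and let δ > ‖v₀‖_{C(closure(Ω))} e^{−1}. Let u̲ : closure(Ω) × [0,T] → ℝ be continuous, C² in x and C¹ in t on Ω × (0,T] with t ↦ u̲(x,t) of class C¹ on [0,T] for each x ∈ Ω, and suppose: ∂ₜ u̲ = Δ u̲ in Ω × (0,T]; u̲(x,t) = 0 for x ∈ ∂Ω; 0 ≤ u̲(x,0) ≤ min{u₀(x),1} for x ∈ Ω; u̲ > 0 in Ω × (0,T]; and (m−1) ∂ₜ u̲(x,t) ≤ u̲(x,t)^{3−m} for all x ∈ Ω, t ∈ [0,T].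 Let u : closure(Ω) × [0,T] → ℝ be continuous with 0 ≤ u ≤ ‖u₀‖_{C(closure(Ω))}, C² in x and C¹ in t on Ω × (0,T], and suppose u satisfies ∂ₜ u(x,t) = Δ u(x,t) − k v₀(x) u(x,t)^m exp(−k ∫₀ᵗ u(x,τ) dτ) in Ω × (0,T], u(x,t) = 0 for x ∈ ∂Ω and t ∈ (0,T], and u(·,0) = u₀. Then u(x,t) ≥ e^{−δt} u̲(x,t) for all (x,t) ∈ closure(Ω) × [0,T]. -/
/-!
Fix `ε > 0` and look at the first time `t₀` at which `u + ε` touches `e^{-δt} u̲`. The touching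
point `x₀` lies in `Ω`, since on `∂Ω` and at `t = 0` the gap is at least `ε`. There `u - e^{-δt} u̲`
is minimal in space and, over `[0, t₀]`, in time, so the heat equation for `u̲` leaves
`δ e^{-δt₀} u̲ ≤ k v₀ u^m exp(-k ∫₀^{t₀} u)`. If `v₀(x₀) > 0` then `u₀(x₀) = 0`, so `u̲(x₀, 0) = 0`
and `(m - 1) ∂ₜu̲ ≤ u̲^{3-m}` integrates to `u̲(x₀, t₀)^{m-1} ≤ ∫₀^{t₀} u̲`. Since
`u ≥ e^{-δt} u̲ - ε` up to `t₀`, the exponential is at most `e^{kεT} exp(-k e^{-δt₀} u̲^{m-1})`,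
and `y e^{-y} ≤ e^{-1}` with `m ≥ 2` bounds the right-hand side by
`‖v₀‖ e^{-1} e^{kεT} e^{-δt₀} u̲ < δ e^{-δt₀} u̲` once `ε` is small: a contradiction.
Letting `ε → 0` gives the claim.
-/

open Set Filter

noncomputable def supNorm {n : ℕ} (f : EuclideanSpace ℝ (Fin n) → ℝ)
    (s : Set (EuclideanSpace ℝ (Fin n))) : ℝ :=
  sSup ((fun x => |f x|) '' s)

open Topology Real

-- If `c < 0`, the second derivative test makes `a` a local maximum as well, so `φ` is locally
-- constant and `φ'` vanishes near `a`, forcing `c = 0`.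
theorem IsLocalMin.nonneg_of_hasDerivAt_deriv {φ φ' : ℝ → ℝ} {a c : ℝ} (hmin : IsLocalMin φ a)
    (hφ : ∀ᶠ s in 𝓝 a, HasDerivAt φ (φ' s) s) (hφ' : HasDerivAt φ' c a) : 0 ≤ c := by
  by_contra! hc
  have hderiv : deriv φ =ᶠ[𝓝 a] φ' := hφ.mono fun s hs => hs.deriv
  have hmax : IsLocalMax φ a :=
    isLocalMax_of_deriv_deriv_neg ((hφ'.congr_of_eventuallyEq hderiv).deriv ▸ hc)
      hmin.deriv_eq_zero hφ.self_of_nhds.continuousAt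
  have hconst : φ =ᶠ[𝓝 a] fun _ => φ a := by
    filter_upwards [hmin, hmax] with s h₁ h₂ using le_antisymm h₂ h₁
  have hzero : φ' =ᶠ[𝓝 a] fun _ => 0 := by
    filter_upwards [hconst.eventuallyEq_nhds, hφ] with s hs hs'
    exact hs'.unique ((hasDerivAt_const s (φ a)).congr_of_eventuallyEq hs)
  exact hc.ne ((hφ'.congr_of_eventuallyEq hzero.symm).unique (hasDerivAt_const a 0))

theorem IsLocalMin.iteratedFDeriv_two_nonneg {E : Type*} [NormedAddCommGroup E] [NormedSpace ℝ E]
    {h : E → ℝ} {x : E} (hmin : IsLocalMin h x) (hh : ContDiffAt ℝ 2 h x) (v : E) :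
    0 ≤ iteratedFDeriv ℝ 2 h x ![v, v] := by
  have hline : ∀ s : ℝ, HasDerivAt (fun s : ℝ => x + s • v) v s := fun s => by
    simpa using ((hasDerivAt_id s).smul_const v).const_add x
  have hline_tendsto : Tendsto (fun s : ℝ => x + s • v) (𝓝 0) (𝓝 x) := by
    simpa using ((continuous_id.smul continuous_const).const_add x).tendsto (0 : ℝ)
  have hφ : ∀ᶠ s in 𝓝 (0 : ℝ),
      HasDerivAt (fun s : ℝ => h (x + s • v)) (fderiv ℝ h (x + s • v) v) s := by
    have hnear : ∀ᶠ y in 𝓝 x, ContDiffAt ℝ 2 h y := hh.eventually (by simp)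
    filter_upwards [hline_tendsto.eventually hnear] with s hs
    exact (hs.differentiableAt (by norm_num)).hasFDerivAt.comp_hasDerivAt s (hline s)
  have hφ' : HasDerivAt (fun s : ℝ => fderiv ℝ h (x + s • v) v)
      (fderiv ℝ (fderiv ℝ h) x v v) 0 := by
    have hD : HasFDerivAt (fderiv ℝ h) (fderiv ℝ (fderiv ℝ h) x) (x + (0 : ℝ) • v) := by
      simpa using ((hh.fderiv_right (m := 1) (by norm_num)).differentiableAt
        (by norm_num)).hasFDerivAt
    have hD' : HasDerivAt (fun s : ℝ => fderiv ℝ h (x + s • v)) (fderiv ℝ (fderiv ℝ h) x v) 0 :=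
      hD.comp_hasDerivAt 0 (hline 0)
    have := hD'.clm_apply (hasDerivAt_const (0 : ℝ) v)
    simp only [map_zero, add_zero] at this
    exact this
  have hmin' : IsLocalMin (fun s : ℝ => h (x + s • v)) 0 := by
    filter_upwards [hline_tendsto.eventually hmin] with s hs
    simpa using hs
  simpa [iteratedFDeriv_two_apply] using hmin'.nonneg_of_hasDerivAt_deriv hφ hφ'

theorem IsMinOn.hasDerivWithinAt_Icc_right_nonpos {F : ℝ → ℝ} {D a b : ℝ} (hab : a < b)
    (hmin : IsMinOn F (Icc a b) b) (hF : HasDerivWithinAt F D (Icc a b) b) : D ≤ 0 := by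
  have hdir : a - b ∈ posTangentConeAt (Icc a b) b := by
    apply mem_posTangentConeAt_of_segment_subset
    rw [add_sub_cancel, segment_symm, segment_eq_Icc hab.le]
  have := hmin.localize.hasFDerivWithinAt_nonneg hF.hasFDerivWithinAt hdir
  simp only [ContinuousLinearMap.toSpanSingleton_apply, smul_eq_mul] at this
  nlinarith

theorem ContinuousOn.curry_left {X : Type*} [TopologicalSpace X] {Z : X → ℝ → ℝ} {K : Set X}
    {I : Set ℝ} (hZ : ContinuousOn (fun p : X × ℝ => Z p.1 p.2) (K ×ˢ I)) {x : X} (hx : x ∈ K) :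
    ContinuousOn (Z x) I :=
  hZ.comp (continuousOn_const.prodMk continuousOn_id) fun _ hs => ⟨hx, hs⟩

theorem exists_first_zero {X : Type*} [TopologicalSpace X] {K : Set X} (hK : IsCompact K)
    {T : ℝ} {Z : X → ℝ → ℝ} (hZ : ContinuousOn (fun p : X × ℝ => Z p.1 p.2) (K ×ˢ Icc 0 T))
    (hZ0 : ∀ x ∈ K, 0 < Z x 0) (hneg : ∃ x ∈ K, ∃ t ∈ Icc 0 T, Z x t ≤ 0) :
    ∃ x₀ ∈ K, ∃ t₀ ∈ Ioc 0 T, Z x₀ t₀ = 0 ∧ ∀ x ∈ K, ∀ t ∈ Icc 0 t₀, 0 ≤ Z x t := by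
  obtain ⟨x₁, hx₁, t₁, ht₁, hZ₁⟩ := hneg
  set A := K ×ˢ Icc 0 T ∩ (fun p : X × ℝ => Z p.1 p.2) ⁻¹' Iic 0
  have hA : IsCompact A :=
    hZ.lowerSemicontinuousOn.isCompact_inter_preimage_Iic (hK.prod isCompact_Icc) 0
  obtain ⟨⟨x₀, t₀⟩, ⟨⟨hx₀, ht₀⟩, hZx₀⟩, hfirst⟩ :=
    hA.exists_isMinOn ⟨(x₁, t₁), ⟨hx₁, ht₁⟩, hZ₁⟩ continuous_snd.continuousOn
  have hpos : 0 < t₀ := ht₀.1.lt_of_ne fun h => (hZ0 x₀ hx₀).not_ge (h ▸ hZx₀)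
  have hbefore : ∀ x ∈ K, ∀ t ∈ Ico 0 t₀, 0 < Z x t := fun x hx t ht => by
    by_contra! h
    exact ht.2.not_ge (hfirst (a := (x, t)) ⟨⟨hx, ht.1, ht.2.le.trans ht₀.2⟩, h⟩)
  have hupto : ∀ x ∈ K, ∀ t ∈ Icc 0 t₀, 0 ≤ Z x t := by
    intro x hx
    have hclosed : IsClosed (Icc 0 T ∩ Z x ⁻¹' Ici 0) :=
      (hZ.curry_left hx).preimage_isClosed_of_isClosed isClosed_Icc isClosed_Ici
    have hsub : Ico 0 t₀ ⊆ Icc 0 T ∩ Z x ⁻¹' Ici 0 := fun t ht =>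
      ⟨⟨ht.1, ht.2.le.trans ht₀.2⟩, (hbefore x hx t ht).le⟩
    rw [← closure_Ico hpos.ne]
    exact fun t ht => (hclosed.closure_subset_iff.2 hsub ht).2
  exact ⟨x₀, hx₀, t₀, ⟨hpos, ht₀.2⟩, le_antisymm hZx₀ (hupto x₀ hx₀ t₀ ⟨hpos.le, le_rfl⟩),
    hupto⟩

theorem laplacian_nonneg_of_isLocalMin {n : ℕ} {f : EuclideanSpace ℝ (Fin n) → ℝ}
    {x : EuclideanSpace ℝ (Fin n)} (hmin : IsLocalMin f x) (hf : ContDiffAt ℝ 2 f x) :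
    0 ≤ laplacian f x :=
  Finset.sum_nonneg fun _ _ => hmin.iteratedFDeriv_two_nonneg hf _

theorem laplacian_sub_const_mul {n : ℕ} {f g : EuclideanSpace ℝ (Fin n) → ℝ}
    {x : EuclideanSpace ℝ (Fin n)} (hf : ContDiffAt ℝ 2 f x) (hg : ContDiffAt ℝ 2 g x) (c : ℝ) :
    laplacian (fun y => f y - c * g y) x = laplacian f x - c * laplacian g x := by
  change laplacian (f - c • g) x = _
  have hcg : ContDiffAt ℝ 2 (c • g) x := hg.const_smul c
  simp [laplacian, iteratedFDeriv_sub_apply (i := 2) hf hcg,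
    iteratedFDeriv_const_smul_apply (i := 2) hg, Finset.mul_sum]

theorem time_deriv_sub_laplacian_le_of_isMin {n : ℕ} {u w : EuclideanSpace ℝ (Fin n) → ℝ → ℝ}
    {x₀ : EuclideanSpace ℝ (Fin n)} {t₀ δ ut wt : ℝ} (ht₀ : 0 < t₀)
    (hux : ContDiffAt ℝ 2 (fun y => u y t₀) x₀) (hwx : ContDiffAt ℝ 2 (fun y => w y t₀) x₀)
    (hut : HasDerivWithinAt (u x₀) ut (Icc 0 t₀) t₀)
    (hwt : HasDerivWithinAt (w x₀) wt (Icc 0 t₀) t₀)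
    (hspace : IsLocalMin (fun y => u y t₀ - exp (-δ * t₀) * w y t₀) x₀)
    (htime : IsMinOn (fun s => u x₀ s - exp (-δ * s) * w x₀ s) (Icc 0 t₀) t₀) :
    ut - laplacian (fun y => u y t₀) x₀ ≤
      exp (-δ * t₀) * (wt - laplacian (fun y => w y t₀) x₀ - δ * w x₀ t₀) := by
  have hlap := laplacian_nonneg_of_isLocalMin hspace (hux.sub (contDiffAt_const.mul hwx))
  rw [laplacian_sub_const_mul hux hwx] at hlap
  have hexp : HasDerivAt (fun s => exp (-δ * s)) (exp (-δ * t₀) * -δ) t₀ := by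
    simpa using ((hasDerivAt_id t₀).const_mul (-δ)).exp
  have hderiv := htime.hasDerivWithinAt_Icc_right_nonpos ht₀
    (hut.sub (hexp.hasDerivWithinAt.mul hwt))
  nlinarith

theorem rpow_le_integral_of_deriv_le {g g' : ℝ → ℝ} {m t : ℝ} (hm : 1 < m) (ht : 0 < t)
    (hg : ContinuousOn g (Icc 0 t)) (hg0 : g 0 = 0) (hpos : ∀ s ∈ Ioo 0 t, 0 < g s)
    (hderiv : ∀ s ∈ Ioo 0 t, HasDerivAt g (g' s) s)
    (hineq : ∀ s ∈ Ioo 0 t, (m - 1) * g' s ≤ g s ^ (3 - m)) :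
    g t ^ (m - 1) ≤ ∫ s in 0..t, g s := by
  have hG : ∀ s ∈ Ioo 0 t, HasDerivAt (fun r => (∫ τ in 0..r, g τ) - g r ^ (m - 1))
      (g s - g' s * (m - 1) * g s ^ (m - 1 - 1)) s := by
    intro s hs
    have hcont : ContinuousOn g (uIcc 0 s) := by
      rw [uIcc_of_le hs.1.le]
      exact hg.mono (Icc_subset_Icc_right hs.2.le)
    exact (intervalIntegral.integral_hasDerivAt_right hcont.intervalIntegrable
      ((hg.mono Ioo_subset_Icc_self).stronglyMeasurableAtFilter isOpen_Ioo s hs)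
      (hg.continuousAt (Icc_mem_nhds hs.1 hs.2))).sub
      ((hderiv s hs).rpow_const (Or.inl (hpos s hs).ne'))
  have hmono : MonotoneOn (fun r => (∫ τ in 0..r, g τ) - g r ^ (m - 1)) (Icc 0 t) := by
    refine monotoneOn_of_deriv_nonneg (convex_Icc 0 t) ?_ ?_ ?_
    · have hprim := intervalIntegral.continuousOn_primitive_interval'
        (hg.intervalIntegrable_of_Icc (μ := MeasureTheory.volume) ht.le) left_mem_uIcc
      rw [uIcc_of_le ht.le] at hprim
      exact hprim.sub (hg.rpow_const fun _ _ => Or.inr (by linarith))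
    · rw [interior_Icc]
      exact fun s hs => (hG s hs).differentiableAt.differentiableWithinAt
    · rw [interior_Icc]
      intro s hs
      rw [(hG s hs).deriv]
      have hgs := hpos s hs
      have key : g s ^ (m - 2) * ((m - 1) * g' s) ≤ g s := by
        calc g s ^ (m - 2) * ((m - 1) * g' s) ≤ g s ^ (m - 2) * g s ^ (3 - m) := by
              gcongr; exact hineq s hs
          _ = g s := by rw [← rpow_add hgs]; norm_num
      rw [show m - 1 - 1 = m - 2 by ring]
      linarith
  have := hmono (left_mem_Icc.2 ht.le) (right_mem_Icc.2 ht.le) ht.le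
  simp only [intervalIntegral.integral_same, hg0, zero_rpow (by linarith : m - 1 ≠ 0)] at this
  linarith

theorem exp_mul_integral_sub_le_integral {U W : ℝ → ℝ} {δ ε t : ℝ} (hδ : 0 ≤ δ) (ht : 0 ≤ t)
    (hU : ContinuousOn U (Icc 0 t)) (hW : ContinuousOn W (Icc 0 t))
    (hW0 : ∀ s ∈ Icc 0 t, 0 ≤ W s) (hUW : ∀ s ∈ Icc 0 t, exp (-δ * s) * W s - ε ≤ U s) :
    exp (-δ * t) * (∫ s in 0..t, W s) - ε * t ≤ ∫ s in 0..t, U s := by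
  have hWi := hW.intervalIntegrable_of_Icc (μ := MeasureTheory.volume) ht
  have hlhs : exp (-δ * t) * (∫ s in 0..t, W s) - ε * t =
      ∫ s in 0..t, (exp (-δ * t) * W s - ε) := by
    rw [intervalIntegral.integral_sub (hWi.const_mul _) intervalIntegrable_const,
      intervalIntegral.integral_const_mul, intervalIntegral.integral_const, smul_eq_mul, sub_zero,
      mul_comm t]
  rw [hlhs]
  refine intervalIntegral.integral_mono_on ht ((hWi.const_mul _).sub intervalIntegrable_const)
    (hU.intervalIntegrable_of_Icc ht) fun s hs => le_trans ?_ (hUW s hs)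
  have hexp : exp (-δ * t) ≤ exp (-δ * s) := exp_le_exp.2 (by nlinarith [hs.2])
  linarith [mul_le_mul_of_nonneg_right hexp (hW0 s hs)]

theorem mul_rpow_mul_exp_neg_le {k m a β : ℝ} (hk : 0 < k) (hm : 2 ≤ m) (ha : 0 < a)
    (hβ0 : 0 < β) (hβ1 : β ≤ 1) :
    k * (β * a) ^ m * exp (-(k * (β * a ^ (m - 1)))) ≤ β * a * exp (-1) := by
  have hβm : β ^ m = β ^ (m - 2) * β * β := by
    rw [← rpow_add_one hβ0.ne', ← rpow_add_one hβ0.ne']; ring_nf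
  have ham : a ^ m = a ^ (m - 1) * a := by
    rw [← rpow_add_one ha.ne']; ring_nf
  set y := k * (β * a ^ (m - 1))
  have hβ : β ^ (m - 2) ≤ 1 := rpow_le_one hβ0.le hβ1 (by linarith)
  have hy : y * exp (-y) ≤ exp (-1) := mul_exp_neg_le_exp_neg_one y
  calc k * (β * a) ^ m * exp (-y) = β * a * (β ^ (m - 2) * (y * exp (-y))) := by
        rw [mul_rpow hβ0.le ha.le, hβm, ham]; ring
    _ ≤ β * a * (1 * exp (-1)) := by
        gcongr
    _ = β * a * exp (-1) := by ring

theorem reaction_term_lt {k m a β u v V I η δ : ℝ} (hk : 0 < k) (hm : 2 ≤ m) (ha : 0 < a)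
    (hβ0 : 0 < β) (hβ1 : β ≤ 1) (hu0 : 0 ≤ u) (hu : u ≤ β * a) (hv0 : 0 ≤ v) (hv : v ≤ V)
    (hI : β * a ^ (m - 1) - η ≤ I) (hδ : V * exp (-1) * exp (k * η) < δ) :
    k * v * u ^ m * exp (-(k * I)) < δ * (β * a) := by
  have hV : 0 ≤ V * exp (k * η) := mul_nonneg (hv0.trans hv) (exp_pos _).le
  have hum : u ^ m ≤ (β * a) ^ m := rpow_le_rpow hu0 hu (by linarith)
  have hexp : exp (-(k * I)) ≤ exp (k * η) * exp (-(k * (β * a ^ (m - 1)))) := by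
    rw [← exp_add]
    gcongr
    linarith [mul_le_mul_of_nonneg_left hI hk.le]
  calc k * v * u ^ m * exp (-(k * I))
      ≤ k * V * (β * a) ^ m * (exp (k * η) * exp (-(k * (β * a ^ (m - 1))))) := by
        have hkV : 0 ≤ k * V := mul_nonneg hk.le (hv0.trans hv)
        gcongr
    _ = V * exp (k * η) * (k * (β * a) ^ m * exp (-(k * (β * a ^ (m - 1))))) := by ring
    _ ≤ V * exp (k * η) * (β * a * exp (-1)) :=
        mul_le_mul_of_nonneg_left (mul_rpow_mul_exp_neg_le hk hm ha hβ0 hβ1) hV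
    _ = V * exp (-1) * exp (k * η) * (β * a) := by ring
    _ < δ * (β * a) := by gcongr

theorem abs_le_supNorm {n : ℕ} {f : EuclideanSpace ℝ (Fin n) → ℝ}
    {s : Set (EuclideanSpace ℝ (Fin n))} (hs : IsCompact s) (hf : ContinuousOn f s) {x}
    (hx : x ∈ s) : |f x| ≤ supNorm f s :=
  le_csSup (hs.image_of_continuousOn hf.abs).bddAbove ⟨x, hx, rfl⟩

section Comparison

variable {n : ℕ} {Ω : Set (EuclideanSpace ℝ (Fin n))} {T m k δ ε : ℝ}
  {u₀ v₀ : EuclideanSpace ℝ (Fin n) → ℝ} {u w wt : EuclideanSpace ℝ (Fin n) → ℝ → ℝ}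

structure IsLowerBarrier (Ω : Set (EuclideanSpace ℝ (Fin n))) (T m : ℝ)
    (u₀ : EuclideanSpace ℝ (Fin n) → ℝ) (w wt : EuclideanSpace ℝ (Fin n) → ℝ → ℝ) : Prop where
  continuousOn : ContinuousOn (fun p : EuclideanSpace ℝ (Fin n) × ℝ => w p.1 p.2)
    (closure Ω ×ˢ Icc 0 T)
  contDiffOn : ∀ t ∈ Ioc 0 T, ContDiffOn ℝ 2 (fun y => w y t) Ω
  hasDerivWithinAt : ∀ x ∈ Ω, ∀ t ∈ Icc 0 T, HasDerivWithinAt (w x) (wt x t) (Icc 0 T) t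
  heat : ∀ x ∈ Ω, ∀ t ∈ Ioc 0 T, wt x t = laplacian (fun y => w y t) x
  boundary : ∀ x ∈ frontier Ω, ∀ t ∈ Icc 0 T, w x t = 0
  initial : ∀ x ∈ Ω, 0 ≤ w x 0 ∧ w x 0 ≤ min (u₀ x) 1
  pos : ∀ x ∈ Ω, ∀ t ∈ Ioc 0 T, 0 < w x t
  deriv_le : ∀ x ∈ Ω, ∀ t ∈ Icc 0 T, (m - 1) * wt x t ≤ w x t ^ (3 - m)

structure IsClassicalSolution (Ω : Set (EuclideanSpace ℝ (Fin n))) (T m k : ℝ)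
    (u₀ v₀ : EuclideanSpace ℝ (Fin n) → ℝ) (u : EuclideanSpace ℝ (Fin n) → ℝ → ℝ) : Prop where
  continuousOn : ContinuousOn (fun p : EuclideanSpace ℝ (Fin n) × ℝ => u p.1 p.2)
    (closure Ω ×ˢ Icc 0 T)
  nonneg : ∀ x ∈ closure Ω, ∀ t ∈ Icc 0 T, 0 ≤ u x t
  contDiffOn : ∀ t ∈ Ioc 0 T, ContDiffOn ℝ 2 (fun y => u y t) Ω
  hasDerivWithinAt : ∀ x ∈ Ω, ∀ t ∈ Ioc 0 T, HasDerivWithinAt (u x)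
    (laplacian (fun y => u y t) x - k * v₀ x * u x t ^ m * exp (-(k * ∫ τ in 0..t, u x τ)))
    (Icc 0 T) t
  boundary : ∀ x ∈ frontier Ω, ∀ t ∈ Ioc 0 T, u x t = 0
  initial : ∀ x ∈ closure Ω, u x 0 = u₀ x

theorem IsLowerBarrier.exp_mul_rpow_sub_le_integral (hw : IsLowerBarrier Ω T m u₀ w wt)
    (hm : 1 < m) (hδ : 0 ≤ δ) {x₀ : EuclideanSpace ℝ (Fin n)} {t₀ : ℝ} (hx₀ : x₀ ∈ Ω)
    (ht₀ : t₀ ∈ Ioc 0 T) (hw0 : w x₀ 0 = 0) {U : ℝ → ℝ} (hU : ContinuousOn U (Icc 0 t₀))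
    (hUw : ∀ s ∈ Icc 0 t₀, exp (-δ * s) * w x₀ s - ε ≤ U s) :
    exp (-δ * t₀) * w x₀ t₀ ^ (m - 1) - ε * t₀ ≤ ∫ s in 0..t₀, U s := by
  have hIcc : ∀ s ∈ Ioo 0 t₀, s ∈ Icc 0 T := fun s hs => ⟨hs.1.le, hs.2.le.trans ht₀.2⟩
  have hwc := (hw.continuousOn.curry_left (subset_closure hx₀)).mono (Icc_subset_Icc_right ht₀.2)
  have hrpow := rpow_le_integral_of_deriv_le hm ht₀.1 hwc hw0
    (fun s hs => hw.pos x₀ hx₀ s ⟨hs.1, hs.2.le.trans ht₀.2⟩)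
    (fun s hs => (hw.hasDerivWithinAt x₀ hx₀ s (hIcc s hs)).hasDerivAt
      (Icc_mem_nhds hs.1 (hs.2.trans_le ht₀.2)))
    (fun s hs => hw.deriv_le x₀ hx₀ s (hIcc s hs))
  have hint := exp_mul_integral_sub_le_integral hδ ht₀.1.le hU hwc (fun s hs =>
    hs.1.eq_or_lt.elim (fun h => h ▸ hw0.ge)
      fun h => (hw.pos x₀ hx₀ s ⟨h, hs.2.trans ht₀.2⟩).le) hUw
  nlinarith [mul_le_mul_of_nonneg_left hrpow (exp_pos (-δ * t₀)).le]

namespace IsClassicalSolution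

theorem exists_first_touch (hu : IsClassicalSolution Ω T m k u₀ v₀ u)
    (hw : IsLowerBarrier Ω T m u₀ w wt) (hΩo : IsOpen Ω) (hΩc : IsCompact (closure Ω))
    (hu₀ : ∀ x ∈ closure Ω, 0 ≤ u₀ x) (hε : 0 < ε)
    (hneg : ∃ x ∈ closure Ω, ∃ t ∈ Icc 0 T, u x t + ε ≤ exp (-δ * t) * w x t) :
    ∃ x₀ ∈ Ω, ∃ t₀ ∈ Ioc 0 T, u x₀ t₀ - exp (-δ * t₀) * w x₀ t₀ + ε = 0 ∧
      ∀ x ∈ closure Ω, ∀ t ∈ Icc 0 t₀, 0 ≤ u x t - exp (-δ * t) * w x t + ε := by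
  obtain ⟨x, hx, t, ht, hxt⟩ := hneg
  have hmem : ∀ y ∈ closure Ω, y ∈ Ω ∨ y ∈ frontier Ω := fun y hy => by
    rw [hΩo.frontier_eq]; tauto
  have hZ : ContinuousOn (fun p : EuclideanSpace ℝ (Fin n) × ℝ =>
      u p.1 p.2 - exp (-δ * p.2) * w p.1 p.2 + ε) (closure Ω ×ˢ Icc 0 T) :=
    (hu.continuousOn.sub ((by fun_prop : Continuous fun p : EuclideanSpace ℝ (Fin n) × ℝ =>
      exp (-δ * p.2)).continuousOn.mul hw.continuousOn)).add continuousOn_const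
  have hZ0 : ∀ y ∈ closure Ω, 0 < u y 0 - exp (-δ * 0) * w y 0 + ε := fun y hy => by
    have hw0 : w y 0 ≤ u₀ y := (hmem y hy).elim
      (fun h => (hw.initial y h).2.trans (min_le_left _ _))
      fun h => by rw [hw.boundary y h 0 ⟨le_rfl, ht.1.trans ht.2⟩]; exact hu₀ y hy
    simp only [mul_zero, exp_zero, one_mul, hu.initial y hy]
    linarith
  obtain ⟨x₀, hx₀, t₀, ht₀, hzero, hnonneg⟩ :=
    exists_first_zero (Z := fun y s => u y s - exp (-δ * s) * w y s + ε) hΩc hZ hZ0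
      ⟨x, hx, t, ht, by linarith⟩
  refine ⟨x₀, (hmem x₀ hx₀).resolve_right fun h => ?_, t₀, ht₀, hzero, hnonneg⟩
  simp only [hu.boundary x₀ h t₀ ht₀, hw.boundary x₀ h t₀ (Ioc_subset_Icc_self ht₀)] at hzero
  linarith

theorem reaction_ge_of_isMin (hu : IsClassicalSolution Ω T m k u₀ v₀ u)
    (hw : IsLowerBarrier Ω T m u₀ w wt) (hΩo : IsOpen Ω) {x₀ : EuclideanSpace ℝ (Fin n)}
    {t₀ : ℝ} (hx₀ : x₀ ∈ Ω) (ht₀ : t₀ ∈ Ioc 0 T)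
    (hspace : IsLocalMin (fun y => u y t₀ - exp (-δ * t₀) * w y t₀) x₀)
    (htime : IsMinOn (fun s => u x₀ s - exp (-δ * s) * w x₀ s) (Icc 0 t₀) t₀) :
    δ * (exp (-δ * t₀) * w x₀ t₀) ≤
      k * v₀ x₀ * u x₀ t₀ ^ m * exp (-(k * ∫ τ in 0..t₀, u x₀ τ)) := by
  have ht₀T : Icc 0 t₀ ⊆ Icc 0 T := Icc_subset_Icc_right ht₀.2
  have hheat := time_deriv_sub_laplacian_le_of_isMin ht₀.1
    ((hu.contDiffOn t₀ ht₀).contDiffAt (hΩo.mem_nhds hx₀))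
    ((hw.contDiffOn t₀ ht₀).contDiffAt (hΩo.mem_nhds hx₀))
    ((hu.hasDerivWithinAt x₀ hx₀ t₀ ht₀).mono ht₀T)
    ((hw.hasDerivWithinAt x₀ hx₀ t₀ (Ioc_subset_Icc_self ht₀)).mono ht₀T) hspace htime
  rw [← hw.heat x₀ hx₀ t₀ ht₀, sub_self, zero_sub] at hheat
  linarith

theorem first_touch_ne_zero (hu : IsClassicalSolution Ω T m k u₀ v₀ u)
    (hw : IsLowerBarrier Ω T m u₀ w wt) (hΩo : IsOpen Ω) (hm : 2 ≤ m) (hk : 0 < k) {V : ℝ}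
    (hv₀ : ∀ x ∈ Ω, 0 ≤ v₀ x) (hv₀V : ∀ x ∈ Ω, v₀ x ≤ V) (hsep : ∀ x ∈ Ω, u₀ x * v₀ x = 0)
    (hε : 0 ≤ ε) (hεδ : V * exp (-1) * exp (k * (ε * T)) < δ) {x₀ : EuclideanSpace ℝ (Fin n)}
    {t₀ : ℝ} (hx₀ : x₀ ∈ Ω) (ht₀ : t₀ ∈ Ioc 0 T)
    (hnonneg : ∀ x ∈ closure Ω, ∀ t ∈ Icc 0 t₀, 0 ≤ u x t - exp (-δ * t) * w x t + ε) :
    u x₀ t₀ - exp (-δ * t₀) * w x₀ t₀ + ε ≠ 0 := by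
  intro hzero
  have hx₀' := subset_closure hx₀
  have ht₀T : Icc 0 t₀ ⊆ Icc 0 T := Icc_subset_Icc_right ht₀.2
  have hreact := hu.reaction_ge_of_isMin (δ := δ) hw hΩo hx₀ ht₀
    (by filter_upwards [hΩo.mem_nhds hx₀] with y hy
        linarith [hnonneg y (subset_closure hy) t₀ ⟨ht₀.1.le, le_rfl⟩])
    (isMinOn_iff.2 fun s hs => by linarith [hnonneg x₀ hx₀' s hs])
  have hw₀ := hw.pos x₀ hx₀ t₀ ht₀
  have hV : 0 ≤ V := (hv₀ x₀ hx₀).trans (hv₀V x₀ hx₀)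
  have hδ : 0 < δ := lt_of_le_of_lt (by positivity) hεδ
  have hβ : 0 < exp (-δ * t₀) := exp_pos _
  rcases (hv₀ x₀ hx₀).eq_or_lt with hv | hv
  · rw [← hv] at hreact
    nlinarith [mul_pos hδ (mul_pos hβ hw₀)]
  have hw0 : w x₀ 0 = 0 := by
    have hu₀ : u₀ x₀ = 0 := (mul_eq_zero.1 (hsep x₀ hx₀)).resolve_right hv.ne'
    have := hw.initial x₀ hx₀
    rw [hu₀, min_eq_left zero_le_one] at this
    exact le_antisymm this.2 this.1
  have hI := hw.exp_mul_rpow_sub_le_integral (ε := ε) (by linarith) hδ.le hx₀ ht₀ hw0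
    ((hu.continuousOn.curry_left hx₀').mono ht₀T) fun s hs => by linarith [hnonneg x₀ hx₀' s hs]
  have hR := reaction_term_lt hk hm hw₀ hβ (exp_le_one_iff.2 (by nlinarith [ht₀.1]))
    (hu.nonneg x₀ hx₀' t₀ (ht₀T ⟨ht₀.1.le, le_rfl⟩)) (by linarith) hv.le (hv₀V x₀ hx₀)
    (by nlinarith [ht₀.2]) hεδ
  linarith

theorem exp_neg_mul_lt_add (hu : IsClassicalSolution Ω T m k u₀ v₀ u)
    (hw : IsLowerBarrier Ω T m u₀ w wt) (hΩo : IsOpen Ω) (hΩc : IsCompact (closure Ω))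
    (hm : 2 ≤ m) (hk : 0 < k) {V : ℝ} (hu₀ : ∀ x ∈ closure Ω, 0 ≤ u₀ x)
    (hv₀ : ∀ x ∈ Ω, 0 ≤ v₀ x) (hv₀V : ∀ x ∈ Ω, v₀ x ≤ V) (hsep : ∀ x ∈ Ω, u₀ x * v₀ x = 0)
    (hε : 0 < ε) (hεδ : V * exp (-1) * exp (k * (ε * T)) < δ) :
    ∀ x ∈ closure Ω, ∀ t ∈ Icc 0 T, exp (-δ * t) * w x t < u x t + ε := by
  by_contra! hneg
  obtain ⟨x₀, hx₀, t₀, ht₀, hzero, hnonneg⟩ := hu.exists_first_touch hw hΩo hΩc hu₀ hε hneg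
  exact hu.first_touch_ne_zero hw hΩo hm hk hv₀ hv₀V hsep hε.le hεδ hx₀ ht₀ hnonneg hzero

end IsClassicalSolution

end Comparison

theorem lower_bound_comparison_general (n : ℕ)
    (Ω : Set (EuclideanSpace ℝ (Fin n))) (hΩo : IsOpen Ω) (hΩb : Bornology.IsBounded Ω)
    (T : ℝ)
    (m : ℝ) (hm2 : 2 < m)
    (k : ℝ) (hk : 0 < k)
    (u₀ v₀ : EuclideanSpace ℝ (Fin n) → ℝ)
    (hv₀c : ContinuousOn v₀ (closure Ω))
    (hu₀nonneg : ∀ x ∈ closure Ω, 0 ≤ u₀ x) (hv₀nonneg : ∀ x ∈ closure Ω, 0 ≤ v₀ x)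
    (hsep : ∀ x ∈ closure Ω, u₀ x * v₀ x = 0)
    (δ : ℝ) (hδ : supNorm v₀ (closure Ω) * Real.exp (-1) < δ)
    -- the heat subsolution u̲ (denoted `w`) and its time derivative `wt`
    (w wt : EuclideanSpace ℝ (Fin n) → ℝ → ℝ)
    (hwcont : ContinuousOn (fun p : EuclideanSpace ℝ (Fin n) × ℝ => w p.1 p.2)
      (closure Ω ×ˢ Set.Icc 0 T))
    (hwx : ∀ t ∈ Set.Ioc 0 T, ContDiffOn ℝ 2 (fun y => w y t) Ω)
    (hwt : ∀ x ∈ Ω, ∀ t ∈ Set.Icc (0 : ℝ) T, HasDerivWithinAt (w x) (wt x t) (Set.Icc 0 T) t)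
    (hwheat : ∀ x ∈ Ω, ∀ t ∈ Set.Ioc 0 T, wt x t = laplacian (fun y => w y t) x)
    (hwbdry : ∀ x ∈ frontier Ω, ∀ t ∈ Set.Icc (0 : ℝ) T, w x t = 0)
    (hwinit : ∀ x ∈ Ω, 0 ≤ w x 0 ∧ w x 0 ≤ min (u₀ x) 1)
    (hwpos : ∀ x ∈ Ω, ∀ t ∈ Set.Ioc 0 T, 0 < w x t)
    (hwineq : ∀ x ∈ Ω, ∀ t ∈ Set.Icc (0 : ℝ) T, (m - 1) * wt x t ≤ w x t ^ (3 - m))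
    -- the solution u of the scalar integro-differential equation
    (u : EuclideanSpace ℝ (Fin n) → ℝ → ℝ)
    (hucont : ContinuousOn (fun p : EuclideanSpace ℝ (Fin n) × ℝ => u p.1 p.2)
      (closure Ω ×ˢ Set.Icc 0 T))
    (hubound : ∀ x ∈ closure Ω, ∀ t ∈ Set.Icc (0 : ℝ) T,
      0 ≤ u x t ∧ u x t ≤ supNorm u₀ (closure Ω))
    (hux : ∀ t ∈ Set.Ioc 0 T, ContDiffOn ℝ 2 (fun y => u y t) Ω)
    (hueq : ∀ x ∈ Ω, ∀ t ∈ Set.Ioc 0 T,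
      HasDerivWithinAt (u x)
        (laplacian (fun y => u y t) x
          - k * v₀ x * u x t ^ m * Real.exp (-(k * ∫ τ in (0 : ℝ)..t, u x τ)))
        (Set.Icc 0 T) t)
    (hubdry : ∀ x ∈ frontier Ω, ∀ t ∈ Set.Ioc 0 T, u x t = 0)
    (huinit : ∀ x ∈ closure Ω, u x 0 = u₀ x) :
    ∀ x ∈ closure Ω, ∀ t ∈ Set.Icc (0 : ℝ) T, Real.exp (-δ * t) * w x t ≤ u x t := by
  intro x hx t ht
  have hΩc : IsCompact (closure Ω) := hΩb.isCompact_closure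
  have hu : IsClassicalSolution Ω T m k u₀ v₀ u :=
    ⟨hucont, fun x hx t ht => (hubound x hx t ht).1, hux, hueq, hubdry, huinit⟩
  have hw : IsLowerBarrier Ω T m u₀ w wt :=
    ⟨hwcont, hwx, hwt, hwheat, hwbdry, hwinit, hwpos, hwineq⟩
  have hv₀V : ∀ y ∈ Ω, v₀ y ≤ supNorm v₀ (closure Ω) := fun y hy =>
    (le_abs_self _).trans (abs_le_supNorm hΩc hv₀c (subset_closure hy))
  have hsmall : ∀ᶠ ε in 𝓝[>] 0,
      supNorm v₀ (closure Ω) * Real.exp (-1) * Real.exp (k * (ε * T)) < δ := by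
    have hcont : Continuous fun ε =>
        supNorm v₀ (closure Ω) * Real.exp (-1) * Real.exp (k * (ε * T)) := by fun_prop
    refine nhdsWithin_le_nhds (hcont.tendsto 0 |>.eventually (gt_mem_nhds ?_))
    simpa using hδ
  have hlim : Tendsto (fun ε => u x t + ε) (𝓝[>] 0) (𝓝 (u x t)) := by
    simpa using ((continuous_const_add (u x t)).tendsto 0).mono_left nhdsWithin_le_nhds
  refine ge_of_tendsto hlim ?_
  filter_upwards [hsmall, self_mem_nhdsWithin] with ε hεδ hε
  exact (hu.exp_neg_mul_lt_add hw hΩo hΩc hm2.le hk hu₀nonneg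
    (fun y hy => hv₀nonneg y (subset_closure hy)) hv₀V (fun y hy => hsep y (subset_closure hy))
    hε hεδ x hx t ht).le

/-- Dirichlet version of Lemma 2.3, case `2 < m < 3`: a classical solution
`u` of `∂ₜ u = Δu − k v₀ u^m exp(−k ∫₀ᵗ u)` with homogeneous Dirichlet boundary values and
initial datum `u₀` lies above `e^{−δt} u̲`, where `u̲` is a positive heat subsolution with
`(m−1) ∂ₜ u̲ ≤ u̲^{3−m}` and `0 ≤ u̲(·,0) ≤ min{u₀, 1}`, provided
`δ > ‖v₀‖_{C(closure Ω)} e^{−1}`. -/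
theorem lower_bound_comparison (n : ℕ)
    (Ω : Set (EuclideanSpace ℝ (Fin n))) (hΩo : IsOpen Ω) (hΩb : Bornology.IsBounded Ω)
    (T : ℝ) (hT : 0 < T)
    (m : ℝ) (hm2 : 2 < m) (hm3 : m < 3)
    (k : ℝ) (hk : 0 < k)
    (u₀ v₀ : EuclideanSpace ℝ (Fin n) → ℝ)
    (hu₀c : ContinuousOn u₀ (closure Ω)) (hv₀c : ContinuousOn v₀ (closure Ω))
    (hu₀nonneg : ∀ x ∈ closure Ω, 0 ≤ u₀ x) (hv₀nonneg : ∀ x ∈ closure Ω, 0 ≤ v₀ x)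
    (hsep : ∀ x ∈ closure Ω, u₀ x * v₀ x = 0)
    (δ : ℝ) (hδ : supNorm v₀ (closure Ω) * Real.exp (-1) < δ)
    -- the heat subsolution u̲ (denoted `w`) and its time derivative `wt`
    (w wt : EuclideanSpace ℝ (Fin n) → ℝ → ℝ)
    (hwcont : ContinuousOn (fun p : EuclideanSpace ℝ (Fin n) × ℝ => w p.1 p.2)
      (closure Ω ×ˢ Set.Icc 0 T))
    (hwx : ∀ t ∈ Set.Ioc 0 T, ContDiffOn ℝ 2 (fun y => w y t) Ω)
    (hwt : ∀ x ∈ Ω, ∀ t ∈ Set.Icc (0 : ℝ) T, HasDerivWithinAt (w x) (wt x t) (Set.Icc 0 T) t)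
    (hwtc : ∀ x ∈ Ω, ContinuousOn (wt x) (Set.Icc 0 T))
    (hwheat : ∀ x ∈ Ω, ∀ t ∈ Set.Ioc 0 T, wt x t = laplacian (fun y => w y t) x)
    (hwbdry : ∀ x ∈ frontier Ω, ∀ t ∈ Set.Icc (0 : ℝ) T, w x t = 0)
    (hwinit : ∀ x ∈ Ω, 0 ≤ w x 0 ∧ w x 0 ≤ min (u₀ x) 1)
    (hwpos : ∀ x ∈ Ω, ∀ t ∈ Set.Ioc 0 T, 0 < w x t)
    (hwineq : ∀ x ∈ Ω, ∀ t ∈ Set.Icc (0 : ℝ) T, (m - 1) * wt x t ≤ w x t ^ (3 - m))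
    -- the solution u of the scalar integro-differential equation
    (u : EuclideanSpace ℝ (Fin n) → ℝ → ℝ)
    (hucont : ContinuousOn (fun p : EuclideanSpace ℝ (Fin n) × ℝ => u p.1 p.2)
      (closure Ω ×ˢ Set.Icc 0 T))
    (hubound : ∀ x ∈ closure Ω, ∀ t ∈ Set.Icc (0 : ℝ) T,
      0 ≤ u x t ∧ u x t ≤ supNorm u₀ (closure Ω))
    (hux : ∀ t ∈ Set.Ioc 0 T, ContDiffOn ℝ 2 (fun y => u y t) Ω)
    (hueq : ∀ x ∈ Ω, ∀ t ∈ Set.Ioc 0 T,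
      HasDerivWithinAt (u x)
        (laplacian (fun y => u y t) x
          - k * v₀ x * u x t ^ m * Real.exp (-(k * ∫ τ in (0 : ℝ)..t, u x τ)))
        (Set.Icc 0 T) t)
    (hubdry : ∀ x ∈ frontier Ω, ∀ t ∈ Set.Ioc 0 T, u x t = 0)
    (huinit : ∀ x ∈ closure Ω, u x 0 = u₀ x) :
    ∀ x ∈ closure Ω, ∀ t ∈ Set.Icc (0 : ℝ) T, Real.exp (-δ * t) * w x t ≤ u x t :=
  lower_bound_comparison_general n Ω hΩo hΩb T m hm2 k hk u₀ v₀ hv₀c hu₀nonneg hv₀nonneg hsep δ hδ w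
    wt hwcont hwx hwt hwheat hwbdry hwinit hwpos hwineq u hucont hubound hux hueq hubdry huinit
end

section
/- Let Ω ⊂ ℝⁿ be a bounded open set, T > 0, m > 2, k > 0. Let u₀, v₀ : closure(Ω) → ℝ be continuous with u₀ ≥ 0, v₀ ≥ 0, u₀ v₀ ≡ 0 and u₀ not identically zero. Let u : closure(Ω) × [0,T] → ℝ be continuous with u ≥ 0, C² in x and C¹ in t on Ω × (0,T], satisfying ∂ₜ u(x,t) = Δ u(x,t) − k v₀(x) u(x,t)^m exp(−k ∫₀ᵗ u(x,τ) dτ) in Ω × (0,T], u(x,t) = 0 for x ∈ ∂Ω and t ∈ (0,T], and u(·,0) = u₀. Let u_∞ : closure(Ω) × [0,T] → ℝ be continuous, C² in x and C¹ in t on Ω × (0,T] with ∂ₜ u_∞ and Δ u_∞ extending continuously to closure(Ω) × [0,T], satisfying ∂ₜ u_∞ = Δ u_∞ in Ω × (0,T], u_∞(x,t) = 0 for x ∈ ∂Ω and t ∈ (0,T], and u_∞(·,0) = u₀. Let M > 0 be any constant with |∂ₜ u_∞(x,t)| ≤ M on closure(Ω) × [0,T]. Then for all (x,t) ∈ closure(Ω)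 × [0,T]: u_∞(x,t) − M t ≤ u(x,t) ≤ u_∞(x,t). -/
/-
Both bounds follow from the weak maximum principle for the heat operator on the compact
cylinder `closure Ω × [0,T]`: at an interior maximum the spatial Laplacian is nonpositive and
the one-sided time derivative is nonnegative. The reaction term `k v₀ uᵐ e^{-k∫u}` is
nonnegative, so `u` is a subsolution of the heat equation and `u ≤ u_∞`. For the lower bound,
`u_∞ - M t` is a subsolution wherever the reaction term is at most `M`; where it exceeds `M`
we have `v₀ > 0`, hence `u₀ = 0`, hence `u_∞(x,t) ≤ M t` by `|∂ₜ u_∞| ≤ M`, so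
`u_∞ - M t ≤ 0 ≤ u` there anyway.
-/

open Set Filter

open Topology

theorem nonpos_of_forall_pos_le_mul {c t : ℝ} (h : ∀ ε > 0, c ≤ ε * t) : c ≤ 0 := by
  have hlim : Tendsto (fun ε : ℝ => ε * t) (𝓝[>] 0) (𝓝 0) := by
    simpa using ((continuous_mul_const t).tendsto 0).mono_left nhdsWithin_le_nhds
  exact ge_of_tendsto hlim (eventually_nhdsWithin_of_forall h)

theorem image_sub_le_mul_sub_of_hasDerivWithinAt_le {f f' : ℝ → ℝ} {a b C : ℝ}
    (hf : ContinuousOn f (Icc a b)) (hf' : ∀ t ∈ Ioo a b, HasDerivWithinAt f (f' t) (Icc a b) t)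
    (hC : ∀ t ∈ Ioo a b, f' t ≤ C) {t : ℝ} (ht : t ∈ Icc a b) :
    f t - f a ≤ C * (t - a) := by
  have hderiv : ∀ s ∈ Ioo a b, HasDerivAt f (f' s) s :=
    fun s hs => (hf' s hs).hasDerivAt (Icc_mem_nhds hs.1 hs.2)
  refine (convex_Icc a b).image_sub_le_mul_sub_of_deriv_le hf ?_ ?_ a
    (left_mem_Icc.2 (ht.1.trans ht.2)) t ht ht.1
  · rw [interior_Icc]
    exact fun s hs => (hderiv s hs).differentiableAt.differentiableWithinAt
  · rw [interior_Icc]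
    exact fun s hs => (hderiv s hs).deriv ▸ hC s hs

theorem IsLocalMaxOn.hasDerivWithinAt_Icc_nonneg {f : ℝ → ℝ} {f' a b t : ℝ}
    (h : IsLocalMaxOn f (Icc a b) t) (hf : HasDerivWithinAt f f' (Icc a b) t)
    (ht : t ∈ Ioc a b) : 0 ≤ f' := by
  have hcone : a - t ∈ posTangentConeAt (Icc a b) t :=
    sub_mem_posTangentConeAt_of_segment_subset ((segment_symm ℝ t a).trans_subset
      (segment_eq_Icc ht.1.le ▸ Icc_subset_Icc le_rfl ht.2))
  have hslope : (a - t) * f' ≤ 0 := by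
    simpa using h.hasFDerivWithinAt_nonpos hf.hasFDerivWithinAt hcone
  nlinarith [ht.1]

theorem IsLocalMax.deriv_deriv_nonpos {f : ℝ → ℝ} {a : ℝ} (h : IsLocalMax f a)
    (hc : ContinuousAt f a) : deriv (deriv f) a ≤ 0 := by
  by_contra! hpos
  -- otherwise `a` would also be a local minimum, so `f` would be locally constant
  have hmin := isLocalMin_of_deriv_deriv_pos hpos h.deriv_eq_zero hc
  have hconst : f =ᶠ[𝓝 a] fun _ => f a := (h.and hmin).mono fun x hx => le_antisymm hx.1 hx.2
  have hzero : deriv (deriv f) a = 0 := by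
    rw [hconst.deriv.deriv_eq]
    simp
  exact hpos.ne' hzero

section LineRestriction

variable {E : Type*} [NormedAddCommGroup E] [NormedSpace ℝ E] {f : E → ℝ} {x : E}

theorem ContDiffAt.deriv_deriv_comp_line (hf : ContDiffAt ℝ 2 f x) (v : E) :
    deriv (deriv fun t : ℝ => f (x + t • v)) 0 = iteratedFDeriv ℝ 2 f x ![v, v] := by
  have hline : ∀ t : ℝ, HasDerivAt (fun r : ℝ => x + r • v) v t := fun t => by
    simpa using ((hasDerivAt_id t).smul_const v).const_add x
  have hnear : ∀ᶠ t in 𝓝 (0 : ℝ), ContDiffAt ℝ 2 f (x + t • v) := by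
    have hx : Tendsto (fun t : ℝ => x + t • v) (𝓝 0) (𝓝 x) := by
      simpa using (hline 0).continuousAt.tendsto
    exact hx.eventually (hf.eventually (by simp))
  have hfirst :
      deriv (fun t : ℝ => f (x + t • v)) =ᶠ[𝓝 0] fun t => fderiv ℝ f (x + t • v) v :=
    hnear.mono fun t ht =>
      ((ht.differentiableAt two_ne_zero).hasFDerivAt.comp_hasDerivAt t (hline t)).deriv
  have hfd : HasFDerivAt (fderiv ℝ f) (fderiv ℝ (fderiv ℝ f) x) (x + (0 : ℝ) • v) := by
    simpa using ((hf.fderiv_right (m := 1) one_add_one_eq_two.le).differentiableAt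
      one_ne_zero).hasFDerivAt
  have hsecond : HasDerivAt (fun t : ℝ => fderiv ℝ f (x + t • v))
      (fderiv ℝ (fderiv ℝ f) x v) 0 :=
    hfd.comp_hasDerivAt 0 (hline 0)
  rw [hfirst.deriv_eq, iteratedFDeriv_two_apply]
  simpa using (hsecond.clm_apply (hasDerivAt_const 0 v)).deriv

theorem IsLocalMax.iteratedFDeriv_two_apply_self_nonpos (h : IsLocalMax f x)
    (hf : ContDiffAt ℝ 2 f x) (v : E) : iteratedFDeriv ℝ 2 f x ![v, v] ≤ 0 := by
  have hline : Continuous fun t : ℝ => x + t • v := by fun_prop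
  have hmax : IsLocalMax (fun t : ℝ => f (x + t • v)) 0 :=
    IsLocalMax.comp_continuous (by simpa using h) hline.continuousAt
  rw [← hf.deriv_deriv_comp_line v]
  exact hmax.deriv_deriv_nonpos (hf.continuousAt.comp_of_eq hline.continuousAt (by simp))

end LineRestriction

section Laplacian

variable {n : ℕ} {f g : EuclideanSpace ℝ (Fin n) → ℝ} {x : EuclideanSpace ℝ (Fin n)}

theorem laplacian_nonpos_of_isLocalMax (h : IsLocalMax f x) (hf : ContDiffAt ℝ 2 f x) :
    laplacian f x ≤ 0 :=
  Finset.sum_nonpos fun _ _ => h.iteratedFDeriv_two_apply_self_nonpos hf _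

theorem laplacian_sub (hf : ContDiffAt ℝ 2 f x) (hg : ContDiffAt ℝ 2 g x) :
    laplacian (fun y => f y - g y) x = laplacian f x - laplacian g x := by
  simp only [laplacian, fun_iteratedFDeriv_sub_apply (i := 2) hf hg, sub_apply,
    Finset.sum_sub_distrib]

theorem laplacian_const (c : ℝ) : laplacian (fun _ => c) x = 0 := by
  simp [laplacian, iteratedFDeriv_const_of_ne two_ne_zero]

end Laplacian

section HeatEquation

variable {n : ℕ} {Ω : Set (EuclideanSpace ℝ (Fin n))} {T : ℝ}

theorem heat_subsolution_nonpos (hΩo : IsOpen Ω) (hΩb : Bornology.IsBounded Ω)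
    {w w' : EuclideanSpace ℝ (Fin n) → ℝ → ℝ}
    (hw : ContinuousOn (fun p : EuclideanSpace ℝ (Fin n) × ℝ => w p.1 p.2)
      (closure Ω ×ˢ Icc 0 T))
    (hw_x : ∀ t ∈ Ioc 0 T, ContDiffOn ℝ 2 (fun y => w y t) Ω)
    (hw_t : ∀ x ∈ Ω, ∀ t ∈ Ioc 0 T, HasDerivWithinAt (w x) (w' x t) (Icc 0 T) t)
    (hw_sub : ∀ x ∈ Ω, ∀ t ∈ Ioc 0 T, 0 < w x t →
      w' x t ≤ laplacian (fun y => w y t) x)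
    (hw_init : ∀ x ∈ closure Ω, w x 0 ≤ 0)
    (hw_bdry : ∀ x ∈ frontier Ω, ∀ t ∈ Ioc 0 T, w x t ≤ 0) :
    ∀ x ∈ closure Ω, ∀ t ∈ Icc 0 T, w x t ≤ 0 := by
  intro x hx t ht
  refine nonpos_of_forall_pos_le_mul (t := t) fun ε hε => sub_nonpos.1 ?_
  -- the slack `ε t` makes the time derivative at a positive maximum strictly positive
  obtain ⟨⟨x₀, t₀⟩, ⟨hx₀, ht₀⟩, hmax⟩ :=
    (hΩb.isCompact_closure.prod isCompact_Icc).exists_isMaxOn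
      (f := fun p => w p.1 p.2 - ε * p.2) ⟨(x, t), hx, ht⟩ (hw.sub (by fun_prop))
  have hle : ∀ y ∈ closure Ω, ∀ s ∈ Icc 0 T, w y s - ε * s ≤ w x₀ t₀ - ε * t₀ :=
    fun y hy s hs => hmax (a := (y, s)) ⟨hy, hs⟩
  refine (hle x hx t ht).trans (not_lt.1 fun hpos => ?_)
  have ht₀pos : 0 < t₀ := ht₀.1.lt_of_ne fun h => by
    subst h
    linarith [hw_init x₀ hx₀]
  have ht₀' : t₀ ∈ Ioc 0 T := ⟨ht₀pos, ht₀.2⟩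
  have hx₀Ω : x₀ ∈ Ω := by
    by_contra hx₀Ω
    have := hw_bdry x₀ (by rw [hΩo.frontier_eq]; exact ⟨hx₀, hx₀Ω⟩) t₀ ht₀'
    nlinarith
  have hlap : laplacian (fun y => w y t₀) x₀ ≤ 0 := by
    refine laplacian_nonpos_of_isLocalMax ?_ ((hw_x t₀ ht₀').contDiffAt (hΩo.mem_nhds hx₀Ω))
    filter_upwards [hΩo.mem_nhds hx₀Ω] with y hy
    linarith [hle y (subset_closure hy) t₀ ht₀]
  have hdt : 0 ≤ w' x₀ t₀ - ε := by
    refine IsLocalMaxOn.hasDerivWithinAt_Icc_nonneg (f := fun t => w x₀ t - ε * t) ?_ ?_ ht₀'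
    · exact IsMaxOn.localize fun s hs => hle x₀ hx₀ s hs
    · exact (hw_t x₀ hx₀Ω t₀ ht₀').fun_sub (hasDerivAt_const_mul ε).hasDerivWithinAt
  linarith [hw_sub x₀ hx₀Ω t₀ ht₀' (by nlinarith)]

theorem heat_comparison (hΩo : IsOpen Ω) (hΩb : Bornology.IsBounded Ω)
    {f g f' g' : EuclideanSpace ℝ (Fin n) → ℝ → ℝ}
    (hf : ContinuousOn (fun p : EuclideanSpace ℝ (Fin n) × ℝ => f p.1 p.2)
      (closure Ω ×ˢ Icc 0 T))
    (hg : ContinuousOn (fun p : EuclideanSpace ℝ (Fin n) × ℝ => g p.1 p.2)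
      (closure Ω ×ˢ Icc 0 T))
    (hf_x : ∀ t ∈ Ioc 0 T, ContDiffOn ℝ 2 (fun y => f y t) Ω)
    (hg_x : ∀ t ∈ Ioc 0 T, ContDiffOn ℝ 2 (fun y => g y t) Ω)
    (hf_t : ∀ x ∈ Ω, ∀ t ∈ Ioc 0 T, HasDerivWithinAt (f x) (f' x t) (Icc 0 T) t)
    (hg_t : ∀ x ∈ Ω, ∀ t ∈ Ioc 0 T, HasDerivWithinAt (g x) (g' x t) (Icc 0 T) t)
    (hfg : ∀ x ∈ Ω, ∀ t ∈ Ioc 0 T, g x t < f x t →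
      f' x t - laplacian (fun y => f y t) x ≤ g' x t - laplacian (fun y => g y t) x)
    (h_init : ∀ x ∈ closure Ω, f x 0 ≤ g x 0)
    (h_bdry : ∀ x ∈ frontier Ω, ∀ t ∈ Ioc 0 T, f x t ≤ g x t) :
    ∀ x ∈ closure Ω, ∀ t ∈ Icc 0 T, f x t ≤ g x t := by
  have hdiff := heat_subsolution_nonpos hΩo hΩb (w := fun x t => f x t - g x t)
    (w' := fun x t => f' x t - g' x t) (hf.sub hg) (fun t ht => (hf_x t ht).sub (hg_x t ht))
    (fun x hx t ht => (hf_t x hx t ht).sub (hg_t x hx t ht)) ?_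
    (fun x hx => sub_nonpos.2 (h_init x hx)) (fun x hx t ht => sub_nonpos.2 (h_bdry x hx t ht))
  · exact fun x hx t ht => sub_nonpos.1 (hdiff x hx t ht)
  · intro x hx t ht hpos
    rw [laplacian_sub ((hf_x t ht).contDiffAt (hΩo.mem_nhds hx))
      ((hg_x t ht).contDiffAt (hΩo.mem_nhds hx))]
    linarith [hfg x hx t ht (sub_pos.1 hpos)]

theorem sub_le_mul_of_abs_hasDerivWithinAt_le {v v' : EuclideanSpace ℝ (Fin n) → ℝ → ℝ}
    {M : ℝ}
    (hv : ContinuousOn (fun p : EuclideanSpace ℝ (Fin n) × ℝ => v p.1 p.2)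
      (closure Ω ×ˢ Icc 0 T))
    (hv_t : ∀ x ∈ Ω, ∀ t ∈ Ioc 0 T, HasDerivWithinAt (v x) (v' x t) (Icc 0 T) t)
    (hM : ∀ x ∈ closure Ω, ∀ t ∈ Icc 0 T, |v' x t| ≤ M) :
    ∀ x ∈ Ω, ∀ t ∈ Icc 0 T, v x t - v x 0 ≤ M * t := by
  intro x hx t ht
  simpa using image_sub_le_mul_sub_of_hasDerivWithinAt_le (f := v x)
    (hv.comp (Continuous.prodMk_right x).continuousOn fun s hs => ⟨subset_closure hx, hs⟩)
    (fun s hs => hv_t x hx s (Ioo_subset_Ioc_self hs))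
    (fun s hs => (le_abs_self _).trans (hM x (subset_closure hx) s (Ioo_subset_Icc_self hs))) ht

variable {u v r : EuclideanSpace ℝ (Fin n) → ℝ → ℝ}

theorem le_heat_solution_of_reaction_nonneg (hΩo : IsOpen Ω) (hΩb : Bornology.IsBounded Ω)
    (hu : ContinuousOn (fun p : EuclideanSpace ℝ (Fin n) × ℝ => u p.1 p.2)
      (closure Ω ×ˢ Icc 0 T))
    (hv : ContinuousOn (fun p : EuclideanSpace ℝ (Fin n) × ℝ => v p.1 p.2)
      (closure Ω ×ˢ Icc 0 T))
    (hu_x : ∀ t ∈ Ioc 0 T, ContDiffOn ℝ 2 (fun y => u y t) Ω)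
    (hv_x : ∀ t ∈ Ioc 0 T, ContDiffOn ℝ 2 (fun y => v y t) Ω)
    (hu_t : ∀ x ∈ Ω, ∀ t ∈ Ioc 0 T,
      HasDerivWithinAt (u x) (laplacian (fun y => u y t) x - r x t) (Icc 0 T) t)
    (hv_t : ∀ x ∈ Ω, ∀ t ∈ Ioc 0 T,
      HasDerivWithinAt (v x) (laplacian (fun y => v y t) x) (Icc 0 T) t)
    (hr : ∀ x ∈ Ω, ∀ t ∈ Ioc 0 T, 0 ≤ r x t)
    (h_init : ∀ x ∈ closure Ω, u x 0 = v x 0)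
    (h_bdry : ∀ x ∈ frontier Ω, ∀ t ∈ Ioc 0 T, u x t = v x t) :
    ∀ x ∈ closure Ω, ∀ t ∈ Icc 0 T, u x t ≤ v x t :=
  heat_comparison hΩo hΩb hu hv hu_x hv_x hu_t hv_t
    (fun x hx t ht _ => by linarith [hr x hx t ht]) (fun x hx => (h_init x hx).le)
    (fun x hx t ht => (h_bdry x hx t ht).le)

theorem heat_solution_sub_mul_le_of_reaction_le (hΩo : IsOpen Ω) (hΩb : Bornology.IsBounded Ω)
    {M : ℝ} (hM : 0 ≤ M)
    (hu : ContinuousOn (fun p : EuclideanSpace ℝ (Fin n) × ℝ => u p.1 p.2)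
      (closure Ω ×ˢ Icc 0 T))
    (hv : ContinuousOn (fun p : EuclideanSpace ℝ (Fin n) × ℝ => v p.1 p.2)
      (closure Ω ×ˢ Icc 0 T))
    (hu_x : ∀ t ∈ Ioc 0 T, ContDiffOn ℝ 2 (fun y => u y t) Ω)
    (hv_x : ∀ t ∈ Ioc 0 T, ContDiffOn ℝ 2 (fun y => v y t) Ω)
    (hu_t : ∀ x ∈ Ω, ∀ t ∈ Ioc 0 T,
      HasDerivWithinAt (u x) (laplacian (fun y => u y t) x - r x t) (Icc 0 T) t)
    (hv_t : ∀ x ∈ Ω, ∀ t ∈ Ioc 0 T,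
      HasDerivWithinAt (v x) (laplacian (fun y => v y t) x) (Icc 0 T) t)
    (hr : ∀ x ∈ Ω, ∀ t ∈ Ioc 0 T, u x t < v x t - M * t → r x t ≤ M)
    (h_init : ∀ x ∈ closure Ω, u x 0 = v x 0)
    (h_bdry : ∀ x ∈ frontier Ω, ∀ t ∈ Ioc 0 T, u x t = v x t) :
    ∀ x ∈ closure Ω, ∀ t ∈ Icc 0 T, v x t - M * t ≤ u x t := by
  refine heat_comparison hΩo hΩb (f := fun x t => v x t - M * t) (hv.sub (by fun_prop)) hu
    (fun t ht => (hv_x t ht).sub contDiffOn_const) hu_x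
    (fun x hx t ht => (hv_t x hx t ht).fun_sub (hasDerivAt_const_mul M).hasDerivWithinAt) hu_t
    (fun x hx t ht hlt => ?_) (fun x hx => by simp [h_init x hx])
    (fun x hx t ht => by nlinarith [h_bdry x hx t ht, ht.1])
  rw [laplacian_sub ((hv_x t ht).contDiffAt (hΩo.mem_nhds hx)) contDiffAt_const, laplacian_const]
  linarith [hr x hx t ht hlt]

end HeatEquation

theorem squeeze_between_heat_solutions_general (n : ℕ)
    (Ω : Set (EuclideanSpace ℝ (Fin n))) (hΩo : IsOpen Ω) (hΩb : Bornology.IsBounded Ω)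
    (T : ℝ)
    (m : ℝ)
    (k : ℝ) (hk : 0 < k)
    (u₀ v₀ : EuclideanSpace ℝ (Fin n) → ℝ)
    (hv₀nonneg : ∀ x ∈ closure Ω, 0 ≤ v₀ x)
    (hsep : ∀ x ∈ closure Ω, u₀ x * v₀ x = 0)
    -- the solution u of the scalar integro-differential equation
    (u : EuclideanSpace ℝ (Fin n) → ℝ → ℝ)
    (hucont : ContinuousOn (fun p : EuclideanSpace ℝ (Fin n) × ℝ => u p.1 p.2)
      (closure Ω ×ˢ Set.Icc 0 T))
    (hunonneg : ∀ x ∈ closure Ω, ∀ t ∈ Set.Icc (0 : ℝ) T, 0 ≤ u x t)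
    (hux : ∀ t ∈ Set.Ioc 0 T, ContDiffOn ℝ 2 (fun y => u y t) Ω)
    (hueq : ∀ x ∈ Ω, ∀ t ∈ Set.Ioc 0 T,
      HasDerivWithinAt (u x)
        (laplacian (fun y => u y t) x
          - k * v₀ x * u x t ^ m * Real.exp (-(k * ∫ τ in (0 : ℝ)..t, u x τ)))
        (Set.Icc 0 T) t)
    (hubdry : ∀ x ∈ frontier Ω, ∀ t ∈ Set.Ioc 0 T, u x t = 0)
    (huinit : ∀ x ∈ closure Ω, u x 0 = u₀ x)
    -- the heat solution uinf, its time derivative utinf and its Laplacian Linf,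
    -- both extending continuously to closure Ω × [0,T]
    (uinf utinf Linf : EuclideanSpace ℝ (Fin n) → ℝ → ℝ)
    (hi_cont : ContinuousOn (fun p : EuclideanSpace ℝ (Fin n) × ℝ => uinf p.1 p.2)
      (closure Ω ×ˢ Set.Icc 0 T))
    (hi_x : ∀ t ∈ Set.Ioc 0 T, ContDiffOn ℝ 2 (fun y => uinf y t) Ω)
    (hi_t : ∀ x ∈ Ω, ∀ t ∈ Set.Ioc 0 T, HasDerivWithinAt (uinf x) (utinf x t) (Set.Icc 0 T) t)
    (hi_lap : ∀ x ∈ Ω, ∀ t ∈ Set.Ioc 0 T, Linf x t = laplacian (fun y => uinf y t) x)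
    (hi_heat : ∀ x ∈ Ω, ∀ t ∈ Set.Ioc 0 T, utinf x t = Linf x t)
    (hi_bdry : ∀ x ∈ frontier Ω, ∀ t ∈ Set.Ioc 0 T, uinf x t = 0)
    (hi_init : ∀ x ∈ closure Ω, uinf x 0 = u₀ x)
    (M : ℝ)
    (hMbound : ∀ x ∈ closure Ω, ∀ t ∈ Set.Icc (0 : ℝ) T, |utinf x t| ≤ M) :
    ∀ x ∈ closure Ω, ∀ t ∈ Set.Icc (0 : ℝ) T,
      uinf x t - M * t ≤ u x t ∧ u x t ≤ uinf x t := by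
  intro x hx t ht
  have hM : 0 ≤ M := (abs_nonneg _).trans (hMbound x hx t ht)
  have hi_t' : ∀ x ∈ Ω, ∀ t ∈ Ioc 0 T,
      HasDerivWithinAt (uinf x) (laplacian (fun y => uinf y t) x) (Icc 0 T) t :=
    fun x hx t ht => (hi_heat x hx t ht).trans (hi_lap x hx t ht) ▸ hi_t x hx t ht
  have h_init : ∀ x ∈ closure Ω, u x 0 = uinf x 0 :=
    fun x hx => (huinit x hx).trans (hi_init x hx).symm
  have h_bdry : ∀ x ∈ frontier Ω, ∀ t ∈ Ioc 0 T, u x t = uinf x t :=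
    fun x hx t ht => (hubdry x hx t ht).trans (hi_bdry x hx t ht).symm
  have hreaction_nonneg : ∀ x ∈ Ω, ∀ t ∈ Ioc 0 T,
      0 ≤ k * v₀ x * u x t ^ m * Real.exp (-(k * ∫ τ in (0 : ℝ)..t, u x τ)) := by
    intro x hx t ht
    have := hunonneg x (subset_closure hx) t (Ioc_subset_Icc_self ht)
    have := hv₀nonneg x (subset_closure hx)
    positivity
  have hreaction_le : ∀ x ∈ Ω, ∀ t ∈ Ioc 0 T, u x t < uinf x t - M * t →
      k * v₀ x * u x t ^ m * Real.exp (-(k * ∫ τ in (0 : ℝ)..t, u x τ)) ≤ M := by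
    intro x hx t ht hlt
    by_contra! hreaction
    have hv₀ : v₀ x ≠ 0 := fun h => by
      rw [h, mul_zero, zero_mul, zero_mul] at hreaction
      linarith
    have hgrowth := sub_le_mul_of_abs_hasDerivWithinAt_le hi_cont hi_t hMbound x hx t
      (Ioc_subset_Icc_self ht)
    rw [hi_init x (subset_closure hx),
      (mul_eq_zero.1 (hsep x (subset_closure hx))).resolve_right hv₀] at hgrowth
    linarith [hunonneg x (subset_closure hx) t (Ioc_subset_Icc_self ht)]
  exact ⟨heat_solution_sub_mul_le_of_reaction_le hΩo hΩb hM hucont hi_cont hux hi_x hueq hi_t'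
      hreaction_le h_init h_bdry x hx t ht,
    le_heat_solution_of_reaction_nonneg hΩo hΩb hucont hi_cont hux hi_x hueq hi_t'
      hreaction_nonneg h_init h_bdry x hx t ht⟩

/-- Dirichlet version of Lemma 2.4: if `u` is a classical solution of
`∂ₜ u = Δu − k v₀ u^m exp(−k ∫₀ᵗ u)` with homogeneous Dirichlet boundary values and
initial datum `u₀`, and `u_∞` solves the heat equation with the same boundary and initial
data, with `|∂ₜ u_∞| ≤ M` on `closure Ω × [0,T]`, then
`u_∞(x,t) − M t ≤ u(x,t) ≤ u_∞(x,t)` on `closure Ω × [0,T]`. -/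
theorem squeeze_between_heat_solutions (n : ℕ)
    (Ω : Set (EuclideanSpace ℝ (Fin n))) (hΩo : IsOpen Ω) (hΩb : Bornology.IsBounded Ω)
    (T : ℝ) (hT : 0 < T)
    (m : ℝ) (hm2 : 2 < m)
    (k : ℝ) (hk : 0 < k)
    (u₀ v₀ : EuclideanSpace ℝ (Fin n) → ℝ)
    (hu₀c : ContinuousOn u₀ (closure Ω)) (hv₀c : ContinuousOn v₀ (closure Ω))
    (hu₀nonneg : ∀ x ∈ closure Ω, 0 ≤ u₀ x) (hv₀nonneg : ∀ x ∈ closure Ω, 0 ≤ v₀ x)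
    (hsep : ∀ x ∈ closure Ω, u₀ x * v₀ x = 0)
    (hu₀ne : ∃ x ∈ closure Ω, u₀ x ≠ 0)
    -- the solution u of the scalar integro-differential equation
    (u : EuclideanSpace ℝ (Fin n) → ℝ → ℝ)
    (hucont : ContinuousOn (fun p : EuclideanSpace ℝ (Fin n) × ℝ => u p.1 p.2)
      (closure Ω ×ˢ Set.Icc 0 T))
    (hunonneg : ∀ x ∈ closure Ω, ∀ t ∈ Set.Icc (0 : ℝ) T, 0 ≤ u x t)
    (hux : ∀ t ∈ Set.Ioc 0 T, ContDiffOn ℝ 2 (fun y => u y t) Ω)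
    (hueq : ∀ x ∈ Ω, ∀ t ∈ Set.Ioc 0 T,
      HasDerivWithinAt (u x)
        (laplacian (fun y => u y t) x
          - k * v₀ x * u x t ^ m * Real.exp (-(k * ∫ τ in (0 : ℝ)..t, u x τ)))
        (Set.Icc 0 T) t)
    (hubdry : ∀ x ∈ frontier Ω, ∀ t ∈ Set.Ioc 0 T, u x t = 0)
    (huinit : ∀ x ∈ closure Ω, u x 0 = u₀ x)
    -- the heat solution uinf, its time derivative utinf and its Laplacian Linf,
    -- both extending continuously to closure Ω × [0,T]
    (uinf utinf Linf : EuclideanSpace ℝ (Fin n) → ℝ → ℝ)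
    (hi_cont : ContinuousOn (fun p : EuclideanSpace ℝ (Fin n) × ℝ => uinf p.1 p.2)
      (closure Ω ×ˢ Set.Icc 0 T))
    (hi_x : ∀ t ∈ Set.Ioc 0 T, ContDiffOn ℝ 2 (fun y => uinf y t) Ω)
    (hi_t : ∀ x ∈ Ω, ∀ t ∈ Set.Ioc 0 T, HasDerivWithinAt (uinf x) (utinf x t) (Set.Icc 0 T) t)
    (hi_tcont : ContinuousOn (fun p : EuclideanSpace ℝ (Fin n) × ℝ => utinf p.1 p.2)
      (closure Ω ×ˢ Set.Icc 0 T))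
    (hi_lap : ∀ x ∈ Ω, ∀ t ∈ Set.Ioc 0 T, Linf x t = laplacian (fun y => uinf y t) x)
    (hi_lapcont : ContinuousOn (fun p : EuclideanSpace ℝ (Fin n) × ℝ => Linf p.1 p.2)
      (closure Ω ×ˢ Set.Icc 0 T))
    (hi_heat : ∀ x ∈ Ω, ∀ t ∈ Set.Ioc 0 T, utinf x t = Linf x t)
    (hi_bdry : ∀ x ∈ frontier Ω, ∀ t ∈ Set.Ioc 0 T, uinf x t = 0)
    (hi_init : ∀ x ∈ closure Ω, uinf x 0 = u₀ x)
    (M : ℝ) (hM : 0 < M)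
    (hMbound : ∀ x ∈ closure Ω, ∀ t ∈ Set.Icc (0 : ℝ) T, |utinf x t| ≤ M) :
    ∀ x ∈ closure Ω, ∀ t ∈ Set.Icc (0 : ℝ) T,
      uinf x t - M * t ≤ u x t ∧ u x t ≤ uinf x t :=
  squeeze_between_heat_solutions_general n Ω hΩo hΩb T m k hk u₀ v₀ hv₀nonneg hsep u hucont hunonneg
    hux hueq hubdry huinit uinf utinf Linf hi_cont hi_x hi_t hi_lap hi_heat hi_bdry hi_init M
    hMbound
end

section
/- Let Ω ⊂ ℝⁿ be a bounded open set, T > 0, m > 2, δ > 0, C > 0. Let v₀ : closure(Ω) → ℝ be continuous with v₀ ≥ 0, and let u̲ : closure(Ω) × [0,T] → ℝ be continuous with u̲(x,t) > 0 for all x ∈ closure(Ω) and t ∈ (0,T]. For each integer k ≥ 1, let u_k : closure(Ω) × [0,T] → ℝ be continuous with 0 ≤ u_k ≤ C and u_k(x,t) ≥ e^{−δt} u̲(x,t) for all (x,t). Then there exist a constant k* > 0 (depending only on C, ‖v₀‖_{C(closure(Ω))}, m, δ, T and u̲) and a sequence (t_k) of numbers in (0,T) with t_k → 0 as k → ∞,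 such that for every integer k > k*, every x ∈ Ω and every t ∈ [t_k, T]: k v₀(x) u_k(x,t)^m exp(−k ∫₀ᵗ u_k(x,τ) dτ) ≤ k^{−1/2}. -/
open Set Filter

/-- Lemma 2.5: if `0 ≤ u_k ≤ C` and `u_k(x,t) ≥ e^{−δt} u̲(x,t)` with `u̲`
continuous and positive on `closure Ω × (0,T]`, then there are `k* > 0` and times
`t_k ∈ (0,T)` with `t_k → 0` such that for all integers `k > k*`, all `x ∈ Ω` and all
`t ∈ [t_k, T]`, the reaction term satisfies
`k v₀(x) u_k(x,t)^m exp(−k ∫₀ᵗ u_k(x,τ) dτ) ≤ k^{−1/2}`. -/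
theorem reaction_term_decay (n : ℕ)
    (Ω : Set (EuclideanSpace ℝ (Fin n))) (hΩo : IsOpen Ω) (hΩb : Bornology.IsBounded Ω)
    (T : ℝ) (hT : 0 < T)
    (m : ℝ) (hm2 : 2 < m)
    (δ : ℝ) (hδ : 0 < δ)
    (C : ℝ) (hC : 0 < C)
    (v₀ : EuclideanSpace ℝ (Fin n) → ℝ)
    (hv₀c : ContinuousOn v₀ (closure Ω)) (hv₀nonneg : ∀ x ∈ closure Ω, 0 ≤ v₀ x)
    (w : EuclideanSpace ℝ (Fin n) → ℝ → ℝ)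
    (hwcont : ContinuousOn (fun p : EuclideanSpace ℝ (Fin n) × ℝ => w p.1 p.2)
      (closure Ω ×ˢ Set.Icc 0 T))
    (hwpos : ∀ x ∈ closure Ω, ∀ t ∈ Set.Ioc 0 T, 0 < w x t)
    (u : ℕ → EuclideanSpace ℝ (Fin n) → ℝ → ℝ)
    (hucont : ∀ k : ℕ, 1 ≤ k → ContinuousOn
      (fun p : EuclideanSpace ℝ (Fin n) × ℝ => u k p.1 p.2) (closure Ω ×ˢ Set.Icc 0 T))
    (hubound : ∀ k : ℕ, 1 ≤ k → ∀ x ∈ closure Ω, ∀ t ∈ Set.Icc (0 : ℝ) T,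
      0 ≤ u k x t ∧ u k x t ≤ C)
    (hulow : ∀ k : ℕ, 1 ≤ k → ∀ x ∈ closure Ω, ∀ t ∈ Set.Icc (0 : ℝ) T,
      Real.exp (-δ * t) * w x t ≤ u k x t) :
    ∃ kstar : ℝ, 0 < kstar ∧ ∃ tseq : ℕ → ℝ,
      (∀ k : ℕ, tseq k ∈ Set.Ioo 0 T) ∧
      Filter.Tendsto tseq Filter.atTop (nhds 0) ∧
      ∀ k : ℕ, kstar < (k : ℝ) → ∀ x ∈ Ω, ∀ t ∈ Set.Icc (tseq k) T,
        (k : ℝ) * v₀ x * u k x t ^ m * Real.exp (-((k : ℝ) * ∫ τ in (0 : ℝ)..t, u k x τ))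
          ≤ (k : ℝ) ^ (-(1 / 2 : ℝ)) := by
  have hclΩc : IsCompact (closure Ω) :=
    Metric.isCompact_of_isClosed_isBounded isClosed_closure hΩb.closure
  have hm0 : (0:ℝ) ≤ m := by linarith
  obtain ⟨M0, hM0⟩ := hclΩc.exists_bound_of_continuousOn hv₀c
  set M : ℝ := max M0 1 with hM
  have hM1 : (1:ℝ) ≤ M := le_max_right _ _
  have hMpos : (0:ℝ) < M := lt_of_lt_of_le one_pos hM1
  have hv₀le : ∀ x ∈ closure Ω, v₀ x ≤ M := by
    intro x hx
    have := hM0 x hx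
    rw [Real.norm_eq_abs] at this
    exact le_trans (le_trans (le_abs_self _) this) (le_max_left _ _)
  -- Key claim: for every ε ∈ (0,T) the bound holds on [ε,T] for all large k.
  have key : ∀ ε : ℝ, ε ∈ Set.Ioo (0:ℝ) T → ∃ K : ℕ, ∀ k : ℕ, K ≤ k →
      ∀ x ∈ Ω, ∀ t ∈ Set.Icc ε T,
        (k : ℝ) * v₀ x * u k x t ^ m * Real.exp (-((k : ℝ) * ∫ τ in (0 : ℝ)..t, u k x τ))
          ≤ (k : ℝ) ^ (-(1 / 2 : ℝ)) := by
    intro ε hε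
    obtain ⟨hε0, hεT⟩ := hε
    rcases Set.eq_empty_or_nonempty Ω with hΩe | ⟨x0, hx0⟩
    · exact ⟨0, fun k _ x hx => absurd hx (by simp [hΩe])⟩
    have hx0' : x0 ∈ closure Ω := subset_closure hx0
    have hS : IsCompact ((closure Ω) ×ˢ Set.Icc (ε/2) T) := hclΩc.prod isCompact_Icc
    have hSsub : (closure Ω) ×ˢ Set.Icc (ε/2) T ⊆ (closure Ω) ×ˢ Set.Icc 0 T := by
      apply Set.prod_mono_right
      apply Set.Icc_subset_Icc_left
      linarith
    have hSne : ((closure Ω) ×ˢ Set.Icc (ε/2) T).Nonempty :=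
      ⟨(x0, ε/2), Set.mk_mem_prod hx0' ⟨le_refl _, by linarith⟩⟩
    obtain ⟨p, hpS, hpmin'⟩ := hS.exists_isMinOn hSne (hwcont.mono hSsub)
    have hpmin : ∀ q ∈ (closure Ω) ×ˢ Set.Icc (ε/2) T, w p.1 p.2 ≤ w q.1 q.2 :=
      fun q hq => hpmin' hq
    have hp1 : p.1 ∈ closure Ω := hpS.1
    have hp2 : p.2 ∈ Set.Icc (ε/2) T := hpS.2
    set wmin := w p.1 p.2 with hwmin
    have hwminpos : 0 < wmin :=
      hwpos p.1 hp1 p.2 ⟨lt_of_lt_of_le (by linarith) hp2.1, hp2.2⟩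
    set c : ℝ := Real.exp (-δ * T) * wmin with hc
    have hcpos : 0 < c := mul_pos (Real.exp_pos _) hwminpos
    set a : ℝ := c * (ε/2) with ha
    have hapos : 0 < a := mul_pos hcpos (by linarith)
    -- pointwise lower bound on the middle interval
    have hlow : ∀ k : ℕ, 1 ≤ k → ∀ x ∈ closure Ω, ∀ τ ∈ Set.Icc (ε/2) ε, c ≤ u k x τ := by
      intro k hk x hx τ hτ
      have hτT : τ ∈ Set.Icc (0:ℝ) T := ⟨by linarith [hτ.1], by linarith [hτ.2]⟩
      have h1 := hulow k hk x hx τ hτT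
      have h2 : wmin ≤ w x τ := hpmin (x, τ) (Set.mk_mem_prod hx ⟨hτ.1, by linarith [hτ.2]⟩)
      have h3 : Real.exp (-δ * T) ≤ Real.exp (-δ * τ) := by
        apply Real.exp_le_exp.mpr
        nlinarith [hτT.2]
      calc c = Real.exp (-δ*T) * wmin := rfl
        _ ≤ Real.exp (-δ*τ) * w x τ := mul_le_mul h3 h2 hwminpos.le (Real.exp_pos _).le
        _ ≤ u k x τ := h1
    -- integral lower bound
    have hint : ∀ k : ℕ, 1 ≤ k → ∀ x ∈ closure Ω, ∀ t ∈ Set.Icc ε T,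
        a ≤ ∫ τ in (0:ℝ)..t, u k x τ := by
      intro k hk x hx t ht
      have hcont : ContinuousOn (fun τ => u k x τ) (Set.Icc 0 T) := by
        have hg : ContinuousOn (fun τ : ℝ => ((x, τ) : EuclideanSpace ℝ (Fin n) × ℝ))
            (Set.Icc 0 T) := (continuous_const.prodMk continuous_id).continuousOn
        exact (hucont k hk).comp hg (fun τ hτ => Set.mk_mem_prod hx hτ)
      have hInt : ∀ s e : ℝ, 0 ≤ s → s ≤ e → e ≤ T →
          IntervalIntegrable (fun τ => u k x τ) MeasureTheory.volume s e := by
        intro s e hs hse he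
        apply ContinuousOn.intervalIntegrable
        apply hcont.mono
        rw [Set.uIcc_of_le hse]
        exact Set.Icc_subset_Icc (by linarith) (by linarith)
      have hεt : ε ≤ t := ht.1
      have htT : t ≤ T := ht.2
      have hnn : ∀ s e : ℝ, 0 ≤ s → s ≤ e → e ≤ T →
          0 ≤ ∫ τ in s..e, u k x τ := by
        intro s e hs hse he
        apply intervalIntegral.integral_nonneg hse
        intro τ hτ
        exact (hubound k hk x hx τ ⟨by linarith [hτ.1], by linarith [hτ.2]⟩).1
      have hi2 : c * (ε/2) ≤ ∫ τ in (ε/2)..ε, u k x τ := by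
        have hmono := intervalIntegral.integral_mono_on (by linarith : ε/2 ≤ ε)
          (intervalIntegrable_const (c := c))
          (hInt (ε/2) ε (by linarith) (by linarith) (by linarith))
          (fun τ hτ => hlow k hk x hx τ hτ)
        rw [intervalIntegral.integral_const, smul_eq_mul] at hmono
        nlinarith [hmono]
      have hsplit1 : (∫ τ in (0:ℝ)..ε, u k x τ) + ∫ τ in ε..t, u k x τ
          = ∫ τ in (0:ℝ)..t, u k x τ :=
        intervalIntegral.integral_add_adjacent_intervals
          (hInt 0 ε le_rfl (by linarith) (by linarith))
          (hInt ε t (by linarith) hεt htT)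
      have hsplit2 : (∫ τ in (0:ℝ)..(ε/2), u k x τ) + ∫ τ in (ε/2)..ε, u k x τ
          = ∫ τ in (0:ℝ)..ε, u k x τ :=
        intervalIntegral.integral_add_adjacent_intervals
          (hInt 0 (ε/2) le_rfl (by linarith) (by linarith))
          (hInt (ε/2) ε (by linarith) (by linarith) (by linarith))
      have h1 := hnn 0 (ε/2) le_rfl (by linarith) (by linarith)
      have h2 := hnn ε t (by linarith) hεt htT
      rw [ha]
      linarith
    -- choose K from asymptotics
    set B : ℝ := M * C ^ m with hB
    have hBpos : 0 < B := mul_pos hMpos (Real.rpow_pos_of_pos hC m)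
    have htend : Filter.Tendsto
        (fun s : ℝ => s ^ ((3:ℝ)/2) * Real.exp (-a * s)) Filter.atTop (nhds 0) :=
      tendsto_rpow_mul_exp_neg_mul_atTop_nhds_zero _ _ hapos
    have htend2 : Filter.Tendsto
        (fun k : ℕ => ((k:ℝ) ^ ((3:ℝ)/2) * Real.exp (-a * k)) * B)
        Filter.atTop (nhds 0) := by
      have := ((htend.comp tendsto_natCast_atTop_atTop).mul_const B)
      simpa using this
    have hev : ∀ᶠ k : ℕ in Filter.atTop,
        ((k:ℝ) ^ ((3:ℝ)/2) * Real.exp (-a * k)) * B < 1 :=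
      htend2.eventually_lt_const one_pos
    obtain ⟨K, hK⟩ := Filter.eventually_atTop.mp hev
    refine ⟨max K 1, fun k hk x hx t ht => ?_⟩
    have hk1 : 1 ≤ k := le_trans (le_max_right _ _) hk
    have hkK : K ≤ k := le_trans (le_max_left _ _) hk
    have hkpos : (0:ℝ) < (k:ℝ) := by exact_mod_cast hk1
    have hx' : x ∈ closure Ω := subset_closure hx
    have htT : t ∈ Set.Icc (0:ℝ) T := ⟨by linarith [ht.1], ht.2⟩
    obtain ⟨hu0, huC⟩ := hubound k hk1 x hx' t htT
    have hIa : a ≤ ∫ τ in (0:ℝ)..t, u k x τ := hint k hk1 x hx' t ht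
    have step1 : (k : ℝ) * v₀ x * u k x t ^ m
          * Real.exp (-((k : ℝ) * ∫ τ in (0:ℝ)..t, u k x τ))
        ≤ (k:ℝ) * M * C ^ m * Real.exp (-a * k) := by
      have e1 : -((k:ℝ) * ∫ τ in (0:ℝ)..t, u k x τ) ≤ -a * (k:ℝ) := by
        nlinarith [hIa, hkpos.le]
      gcongr
      exact hv₀le x hx'
    have hfin : ((k:ℝ) ^ ((3:ℝ)/2) * Real.exp (-a * k)) * B ≤ 1 := (hK k hkK).le
    have hpow : (k:ℝ) ^ (-(1/2:ℝ)) * (k:ℝ) ^ ((3:ℝ)/2) = (k:ℝ) := by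
      rw [← Real.rpow_add hkpos]
      norm_num
    have hid : (k:ℝ) * M * C ^ m * Real.exp (-a * k)
        = (k:ℝ) ^ (-(1/2:ℝ)) * (((k:ℝ) ^ ((3:ℝ)/2) * Real.exp (-a * k)) * B) := by
      rw [hB]
      calc (k:ℝ) * M * C ^ m * Real.exp (-a * k)
          = ((k:ℝ) ^ (-(1/2:ℝ)) * (k:ℝ) ^ ((3:ℝ)/2)) * M * C ^ m * Real.exp (-a * k) := by
            rw [hpow]
        _ = (k:ℝ) ^ (-(1/2:ℝ)) * (((k:ℝ) ^ ((3:ℝ)/2) * Real.exp (-a * k)) * (M * C ^ m)) := by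
            ring
    calc (k : ℝ) * v₀ x * u k x t ^ m
          * Real.exp (-((k : ℝ) * ∫ τ in (0:ℝ)..t, u k x τ))
        ≤ (k:ℝ) * M * C ^ m * Real.exp (-a * k) := step1
      _ = (k:ℝ) ^ (-(1/2:ℝ)) * (((k:ℝ) ^ ((3:ℝ)/2) * Real.exp (-a * k)) * B) := hid
      _ ≤ (k:ℝ) ^ (-(1/2:ℝ)) * 1 :=
          mul_le_mul_of_nonneg_left hfin (Real.rpow_nonneg hkpos.le _)
      _ = (k:ℝ) ^ (-(1/2:ℝ)) := mul_one _
  -- Diagonal construction of the sequence tₖ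
  set ε : ℕ → ℝ := fun j => T / ((j:ℝ) + 2) with hεdef
  have hεIoo : ∀ j, ε j ∈ Set.Ioo (0:ℝ) T := by
    intro j
    have hj : (0:ℝ) ≤ (j:ℝ) := Nat.cast_nonneg j
    constructor
    · positivity
    · rw [div_lt_iff₀ (by positivity)]
      nlinarith
  choose K0 hK0 using fun j => key (ε j) (hεIoo j)
  set K : ℕ → ℕ := fun j => (Finset.range (j+1)).sup K0 with hKdef
  have hK0le : ∀ j, K0 j ≤ K j := fun j => Finset.le_sup (Finset.self_mem_range_succ j)
  have hKmono : Monotone K := fun i j hij =>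
    Finset.sup_mono (Finset.range_subset_range.mpr (by omega))
  set J : ℕ → ℕ := fun k => Nat.findGreatest (fun j => K j ≤ k) k with hJdef
  refine ⟨(K 0 : ℝ) + 1, by positivity, fun k => ε (J k), fun k => hεIoo (J k), ?_, ?_⟩
  · -- tendsto
    have hJtop : Filter.Tendsto J Filter.atTop Filter.atTop := by
      rw [Filter.tendsto_atTop]
      intro b
      filter_upwards [Filter.eventually_ge_atTop (max (K b) b)] with k hk
      exact Nat.le_findGreatest (le_trans (le_max_right _ _) hk)
        (le_trans (le_max_left _ _) hk)
    have hεtend : Filter.Tendsto ε Filter.atTop (nhds 0) := by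
      apply Filter.Tendsto.div_atTop tendsto_const_nhds
      exact tendsto_atTop_add_const_right _ 2 tendsto_natCast_atTop_atTop
    exact hεtend.comp hJtop
  · intro k hk x hx t ht
    have hK0k : K 0 ≤ k := by
      have h1 : ((K 0 : ℕ) : ℝ) < (k:ℝ) := by linarith
      exact_mod_cast h1.le
    have hspec : K (J k) ≤ k :=
      Nat.findGreatest_spec (P := fun j => K j ≤ k) (Nat.zero_le k) hK0k
    exact hK0 (J k) k (le_trans (hK0le (J k)) hspec) x hx t ht
end

section
/- Let Ω ⊂ ℝⁿ be a bounded open set, Ω₀ an open set with closure(Ω₀) a compact subset of Ω, T > 0, m > 2, δ > 0, C > 0. Let v₀ : closure(Ω) → ℝ be continuous with v₀ ≥ 0, and let u̲ : closure(Ω) × [0,T] → ℝ be continuous with u̲(x,t) > 0 for all x ∈ closure(Ω₀) and t ∈ (0,T]. For each integer k ≥ 1, let u_k : closure(Ω) × [0,T] → ℝ be continuous with 0 ≤ u_k ≤ C and u_k(x,t) ≥ e^{−δt} u̲(x,t) for all (x,t) ∈ closure(Ω₀) × [0,T]. Then there exist a constant k* > 0 (depending only on C, ‖v₀‖_{C(closure(Ω))},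 m, δ, T, Ω₀ and u̲) and a sequence (t_k) of numbers in (0,T) with t_k → 0 as k → ∞, such that for every integer k > k*, every x ∈ Ω₀ and every t ∈ [t_k, T]: k v₀(x) u_k(x,t)^m exp(−k ∫₀ᵗ u_k(x,τ) dτ) ≤ k^{−1/2}. -/
open Set Filter

/-- `log x / x → 0` along `ℕ` cast to `ℝ`. -/
lemma aux_log_div_tendsto : Filter.Tendsto (fun k : ℕ => Real.log k / (k : ℝ))
    Filter.atTop (nhds 0) :=
  (Real.isLittleO_log_id_atTop.tendsto_div_nhds_zero).comp tendsto_natCast_atTop_atTop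

set_option maxHeartbeats 1000000 in
/-- Lemma 3.1, interior decay estimate: if `0 ≤ u_k ≤ C` and
`u_k(x,t) ≥ e^{−δt} u̲(x,t)` on `closure Ω₀ × [0,T]` with `u̲` continuous and positive on
`closure Ω₀ × (0,T]`, where `closure Ω₀` is a compact subset of `Ω`, then there are
`k* > 0` and times `t_k ∈ (0,T)` with `t_k → 0` such that for all integers `k > k*`, all
`x ∈ Ω₀` and all `t ∈ [t_k, T]`, the reaction term satisfies
`k v₀(x) u_k(x,t)^m exp(−k ∫₀ᵗ u_k(x,τ) dτ) ≤ k^{−1/2}`. -/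
theorem reaction_term_decay_interior (n : ℕ)
    (Ω : Set (EuclideanSpace ℝ (Fin n))) (hΩo : IsOpen Ω) (hΩb : Bornology.IsBounded Ω)
    (Ω₀ : Set (EuclideanSpace ℝ (Fin n))) (hΩ₀o : IsOpen Ω₀)
    (hΩ₀cpt : IsCompact (closure Ω₀)) (hΩ₀sub : closure Ω₀ ⊆ Ω)
    (T : ℝ) (hT : 0 < T)
    (m : ℝ) (hm2 : 2 < m)
    (δ : ℝ) (hδ : 0 < δ)
    (C : ℝ) (hC : 0 < C)
    (v₀ : EuclideanSpace ℝ (Fin n) → ℝ)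
    (hv₀c : ContinuousOn v₀ (closure Ω)) (hv₀nonneg : ∀ x ∈ closure Ω, 0 ≤ v₀ x)
    (w : EuclideanSpace ℝ (Fin n) → ℝ → ℝ)
    (hwcont : ContinuousOn (fun p : EuclideanSpace ℝ (Fin n) × ℝ => w p.1 p.2)
      (closure Ω ×ˢ Set.Icc 0 T))
    (hwpos : ∀ x ∈ closure Ω₀, ∀ t ∈ Set.Ioc 0 T, 0 < w x t)
    (u : ℕ → EuclideanSpace ℝ (Fin n) → ℝ → ℝ)
    (hucont : ∀ k : ℕ, 1 ≤ k → ContinuousOn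
      (fun p : EuclideanSpace ℝ (Fin n) × ℝ => u k p.1 p.2) (closure Ω ×ˢ Set.Icc 0 T))
    (hubound : ∀ k : ℕ, 1 ≤ k → ∀ x ∈ closure Ω, ∀ t ∈ Set.Icc (0 : ℝ) T,
      0 ≤ u k x t ∧ u k x t ≤ C)
    (hulow : ∀ k : ℕ, 1 ≤ k → ∀ x ∈ closure Ω₀, ∀ t ∈ Set.Icc (0 : ℝ) T,
      Real.exp (-δ * t) * w x t ≤ u k x t) :
    ∃ kstar : ℝ, 0 < kstar ∧ ∃ tseq : ℕ → ℝ,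
      (∀ k : ℕ, tseq k ∈ Set.Ioo 0 T) ∧
      Filter.Tendsto tseq Filter.atTop (nhds 0) ∧
      ∀ k : ℕ, kstar < (k : ℝ) → ∀ x ∈ Ω₀, ∀ t ∈ Set.Icc (tseq k) T,
        (k : ℝ) * v₀ x * u k x t ^ m * Real.exp (-((k : ℝ) * ∫ τ in (0 : ℝ)..t, u k x τ))
          ≤ (k : ℝ) ^ (-(1 / 2 : ℝ)) := by
  classical
  rcases Set.eq_empty_or_nonempty Ω₀ with hΩ₀e | ⟨x₀, hx₀⟩
  · -- trivial case: Ω₀ is empty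
    refine ⟨1, one_pos, fun k => T / ((k : ℝ) + 2), ?_, ?_, ?_⟩
    · intro k
      refine ⟨by positivity, div_lt_self hT (by push_cast; linarith [Nat.cast_nonneg (α := ℝ) k])⟩
    · exact Filter.Tendsto.div_atTop tendsto_const_nhds
        (tendsto_atTop_add_const_right _ 2 tendsto_natCast_atTop_atTop)
    · intro k hk x hx
      rw [hΩ₀e] at hx
      exact absurd hx (Set.notMem_empty x)
  · -- main case
    have hx₀c : x₀ ∈ closure Ω₀ := subset_closure hx₀
    have hΩcl : IsCompact (closure Ω) := hΩb.isCompact_closure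
    have hsubΩ : closure Ω₀ ⊆ closure Ω := fun y hy => subset_closure (hΩ₀sub hy)
    -- max of v₀
    obtain ⟨xm, hxm, hmax⟩ := hΩcl.exists_isMaxOn ⟨x₀, hsubΩ hx₀c⟩ hv₀c
    set Bv : ℝ := v₀ xm with hBv
    set K : ℝ := max Bv 1 * C ^ m with hKdef
    have hKpos : 0 < K := mul_pos (lt_of_lt_of_le one_pos (le_max_right _ _))
      (Real.rpow_pos_of_pos hC m)
    -- times s j and minima c j
    have hsj : ∀ j : ℕ, 0 < T / ((j : ℝ) + 2) ∧ T / ((j : ℝ) + 2) ≤ T := by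
      intro j
      constructor
      · positivity
      · exact le_of_lt (div_lt_self hT (by have := Nat.cast_nonneg (α := ℝ) j; linarith))
    have hcex : ∀ j : ℕ, ∃ c : ℝ, 0 < c ∧ ∀ x ∈ closure Ω₀,
        ∀ t ∈ Set.Icc (T / ((j : ℝ) + 2) / 2) T, c ≤ Real.exp (-δ * t) * w x t := by
      intro j
      set s : ℝ := T / ((j : ℝ) + 2) with hs
      obtain ⟨hs0, hsT⟩ := hsj j
      have hs2T : s / 2 ≤ T := le_trans (by linarith) hsT
      have hKc : IsCompact (closure Ω₀ ×ˢ Set.Icc (s / 2) T) := hΩ₀cpt.prod isCompact_Icc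
      have hne : (closure Ω₀ ×ˢ Set.Icc (s / 2) T).Nonempty :=
        ⟨(x₀, T), hx₀c, ⟨hs2T, le_refl T⟩⟩
      have hsub : closure Ω₀ ×ˢ Set.Icc (s / 2) T ⊆ closure Ω ×ˢ Set.Icc 0 T := by
        intro p hp
        exact ⟨hsubΩ hp.1, ⟨le_trans (by positivity) hp.2.1, hp.2.2⟩⟩
      have hcont : ContinuousOn
          (fun p : EuclideanSpace ℝ (Fin n) × ℝ => Real.exp (-δ * p.2) * w p.1 p.2)
          (closure Ω₀ ×ˢ Set.Icc (s / 2) T) := by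
        apply ContinuousOn.mul
        · exact (Real.continuous_exp.comp (continuous_const.mul continuous_snd)).continuousOn
        · exact hwcont.mono hsub
      obtain ⟨p, hpmem, hpmin⟩ := hKc.exists_isMinOn hne hcont
      refine ⟨Real.exp (-δ * p.2) * w p.1 p.2, ?_, ?_⟩
      · have hp2 : p.2 ∈ Set.Ioc (0 : ℝ) T :=
          ⟨lt_of_lt_of_le (by positivity) hpmem.2.1, hpmem.2.2⟩
        exact mul_pos (Real.exp_pos _) (hwpos p.1 hpmem.1 p.2 hp2)
      · intro x hx t ht
        exact isMinOn_iff.mp hpmin (x, t) (Set.mk_mem_prod hx ht)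
    choose c hc0 hcle using hcex
    set b : ℕ → ℝ := fun j => T / ((j : ℝ) + 2) / 2 * c j with hbdef
    have hb0 : ∀ j, 0 < b j := by
      intro j
      exact mul_pos (by positivity) (hc0 j)
    set a : ℕ → ℝ := fun k => ((3 / 2 : ℝ) * Real.log k + Real.log K) / k with hadef
    have ha0 : Filter.Tendsto a Filter.atTop (nhds 0) := by
      have h1 : Filter.Tendsto (fun k : ℕ => (3 / 2 : ℝ) * (Real.log k / k))
          Filter.atTop (nhds ((3 / 2 : ℝ) * 0)) := aux_log_div_tendsto.const_mul _
      have h2 : Filter.Tendsto (fun k : ℕ => Real.log K / (k : ℝ))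
          Filter.atTop (nhds 0) :=
        Filter.Tendsto.div_atTop tendsto_const_nhds tendsto_natCast_atTop_atTop
      have := h1.add h2
      simp only [mul_zero, add_zero] at this
      refine this.congr (fun k => ?_)
      simp only [hadef]
      ring
    set N : ℕ → ℕ := fun k => Nat.findGreatest (fun j => a k ≤ b j) k with hNdef
    obtain ⟨K₀, hK₀⟩ := Filter.eventually_atTop.1 (ha0.eventually_lt_const (hb0 0))
    refine ⟨(K₀ : ℝ) + 1, by positivity, fun k => T / ((N k : ℝ) + 2), ?_, ?_, ?_⟩
    · intro k
      exact ⟨by positivity, div_lt_self hT (by have := Nat.cast_nonneg (α := ℝ) (N k); linarith)⟩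
    · -- tendsto 0
      have hN : Filter.Tendsto N Filter.atTop Filter.atTop := by
        rw [Filter.tendsto_atTop]
        intro j
        filter_upwards [Filter.eventually_atTop.2
            (Filter.eventually_atTop.1 (ha0.eventually_lt_const (hb0 j))),
          Filter.eventually_ge_atTop j] with k h1 h2
        exact Nat.le_findGreatest h2 h1.le
      exact Filter.Tendsto.div_atTop tendsto_const_nhds
        (tendsto_atTop_add_const_right _ 2 (tendsto_natCast_atTop_atTop.comp hN))
    · intro k hklt x hx t ht
      have hk0 : (0 : ℝ) < k := lt_trans (by positivity) hklt
      have hk1 : 1 ≤ k := by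
        by_contra h
        push_neg at h
        interval_cases k
        simp at hk0
      have hkK₀ : K₀ ≤ k := by
        have : (K₀ : ℝ) < (k : ℝ) := by linarith
        exact_mod_cast this.le
      have hbN : a k ≤ b (N k) := by
        have h := Nat.findGreatest_spec (P := fun j => a k ≤ b j) (Nat.zero_le k)
          (hK₀ k hkK₀).le
        simpa [hNdef] using h
      set s : ℝ := T / ((N k : ℝ) + 2) with hs
      obtain ⟨hs0, hsT⟩ := hsj (N k)
      have hst : s ≤ t := ht.1
      have htT : t ≤ T := ht.2
      have ht0 : 0 ≤ t := le_trans hs0.le hst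
      have hxc : x ∈ closure Ω₀ := subset_closure hx
      have hxΩ : x ∈ closure Ω := hsubΩ hxc
      -- continuity of τ ↦ u k x τ on [0,T]
      have hfc : ContinuousOn (fun τ => u k x τ) (Set.Icc 0 T) := by
        have := (hucont k hk1).comp
          ((continuous_const.prodMk continuous_id).continuousOn
            (s := Set.Icc (0 : ℝ) T))
          (fun τ hτ => Set.mk_mem_prod hxΩ hτ)
        exact this
      have hint : ∀ a₁ a₂ : ℝ, 0 ≤ a₁ → a₁ ≤ a₂ → a₂ ≤ T →
          IntervalIntegrable (fun τ => u k x τ) MeasureTheory.volume a₁ a₂ := by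
        intro a₁ a₂ h1 h2 h3
        apply ContinuousOn.intervalIntegrable
        apply hfc.mono
        rw [Set.uIcc_of_le h2]
        exact Set.Icc_subset_Icc h1 h3
      have hunn : ∀ τ ∈ Set.Icc (0 : ℝ) T, 0 ≤ u k x τ :=
        fun τ hτ => (hubound k hk1 x hxΩ τ hτ).1
      have e1 := intervalIntegral.integral_add_adjacent_intervals
        (hint 0 (s / 2) le_rfl (by positivity) (by linarith))
        (hint (s / 2) s (by positivity) (by linarith) hsT)
      have e2 := intervalIntegral.integral_add_adjacent_intervals
        (hint 0 s le_rfl hs0.le hsT) (hint s t hs0.le hst htT)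
      have hI1 : 0 ≤ ∫ τ in (0 : ℝ)..(s / 2), u k x τ :=
        intervalIntegral.integral_nonneg (by positivity)
          (fun τ hτ => hunn τ ⟨hτ.1, by linarith [hτ.2]⟩)
      have hI3 : 0 ≤ ∫ τ in s..t, u k x τ :=
        intervalIntegral.integral_nonneg hst
          (fun τ hτ => hunn τ ⟨le_trans hs0.le hτ.1, le_trans hτ.2 htT⟩)
      have hI2 : b (N k) ≤ ∫ τ in (s / 2)..s, u k x τ := by
        have hmono : ∫ τ in (s / 2)..s, c (N k) ≤ ∫ τ in (s / 2)..s, u k x τ := by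
          apply intervalIntegral.integral_mono_on (by linarith)
            intervalIntegrable_const
            (hint (s / 2) s (by positivity) (by linarith) hsT)
          intro τ hτ
          have hτIcc : τ ∈ Set.Icc (0 : ℝ) T := ⟨le_trans (by positivity) hτ.1,
            le_trans hτ.2 hsT⟩
          refine le_trans (hcle (N k) x hxc τ ⟨hτ.1, le_trans hτ.2 hsT⟩) ?_
          exact hulow k hk1 x hxc τ hτIcc
        rw [intervalIntegral.integral_const, smul_eq_mul] at hmono
        have : (s - s / 2) * c (N k) = b (N k) := by
          simp only [hbdef]
          rw [← hs]
          ring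
        linarith [hmono, this.symm.le]
      have hIb : b (N k) ≤ ∫ τ in (0 : ℝ)..t, u k x τ := by
        rw [← e2, ← e1]
        linarith
      -- the estimate
      have hu := hubound k hk1 x hxΩ t ⟨ht0, htT⟩
      have hum : u k x t ^ m ≤ C ^ m :=
        Real.rpow_le_rpow hu.1 hu.2 (by linarith)
      have humnn : 0 ≤ u k x t ^ m := Real.rpow_nonneg hu.1 m
      have hv : v₀ x ≤ max Bv 1 := le_trans (hmax hxΩ) (le_max_left _ _)
      have hvnn : 0 ≤ v₀ x := hv₀nonneg x hxΩ
      have step1 : (k : ℝ) * v₀ x * u k x t ^ m *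
          Real.exp (-((k : ℝ) * ∫ τ in (0 : ℝ)..t, u k x τ)) ≤
          (k : ℝ) * K * Real.exp (-((k : ℝ) * b (N k))) := by
        rw [hKdef, ← mul_assoc]
        have hKnn : (0 : ℝ) ≤ (k : ℝ) * max Bv 1 * C ^ m := by positivity
        apply mul_le_mul _ _ (Real.exp_pos _).le hKnn
        · exact mul_le_mul (mul_le_mul le_rfl hv hvnn hk0.le) hum humnn (by positivity)
        · exact Real.exp_le_exp.2 (neg_le_neg (mul_le_mul_of_nonneg_left hIb hk0.le))
      have step2 : (k : ℝ) * K * Real.exp (-((k : ℝ) * b (N k))) ≤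
          (k : ℝ) ^ (-(1 / 2 : ℝ)) := by
        have hlogineq : (3 / 2 : ℝ) * Real.log k + Real.log K ≤ (k : ℝ) * b (N k) := by
          have := (div_le_iff₀ hk0).1 hbN
          linarith [mul_comm (b (N k)) (k : ℝ) ▸ this]
        have lhs_eq : (k : ℝ) * K * Real.exp (-((k : ℝ) * b (N k))) =
            Real.exp (Real.log k + Real.log K + -((k : ℝ) * b (N k))) := by
          rw [Real.exp_add, Real.exp_add, Real.exp_log hk0, Real.exp_log hKpos]
        have rhs_eq : (k : ℝ) ^ (-(1 / 2 : ℝ)) =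
            Real.exp (Real.log k * (-(1 / 2 : ℝ))) := by
          rw [Real.rpow_def_of_pos hk0]
        rw [lhs_eq, rhs_eq, Real.exp_le_exp]
        linarith
      exact le_trans step1 step2
end
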